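/- arXiv:2205.10916 — 3 statements merged into one kernel-verified Lean document; each statement's English description precedes it below -/
import Mathlib

section
/- Let the discrete-time LTI system x(k+1) = A x(k) + B u(k), y(k) = C x(k) with A ∈ ℝ^{n×n}, B ∈ ℝ^{n×q}, C ∈ ℝ^{p×n} have (A, B) controllable. Let (u^d, y^d) be a length-T input/output trajectory of the system and let L ≥ 1 with L + n ≤ T. If u^d is Hankel exciting of order L + n, then for every length-L input/output trajectory (u, y) of the system there exists a vector g ∈ ℝ^{T−L+1} such that 𝓗_L(u^d) g = col(u) and 𝓗_L(y^d) g = col(y). -/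
/-!
Stack the depth-`L` input Hankel matrix on the matrix `[x(0) … x(T−L)]` of data states. The stacked
matrix has full row rank `qL + n`. Indeed, if `(ξ, η)` lies in its left kernel, then for `k ≤ n` the
row vector `θ_k = [η A^{k−1} B, …, η B, ξ, 0, …]` of length `L + n` satisfies
`θ_k 𝓗_{L+n}(u^d) = −η A^k [x(0) …]`, so by Cayley–Hamilton the combination `Σ c_k θ_k` with the
coefficients of the characteristic polynomial of `A` is in the left kernel of `𝓗_{L+n}(u^d)`, hence
zero. Since the characteristic polynomial is monic, this is a linear recurrence which forces `ξ = 0`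
and `η A^m B = 0` for all `m < n`, i.e. `η = 0` by controllability.

Full row rank yields `g` with `𝓗_L(u^d) g = col(u)` and `Σ g_j x^d(j) = x(0)`. Then
`Σ g_j x^d(j + ·)` is a state sequence driven by `u` from `x(0)`, so it is the state of `(u, y)`,
and its output is `y`.
-/

open Matrix

/-- The block Hankel matrix of depth `k` of a signal `ω : {0,…,T−1} → ℝ^q`:
its `(i,j)` block entry (for `i < k`, `j < T−k+1`) is the vector `ω(i+j) ∈ ℝ^q`. -/
noncomputable def hankelMat {q : ℕ} (T : ℕ) (ω : Fin T → Fin q → ℝ) (k : ℕ) :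
    Matrix (Fin k × Fin q) (Fin (T - k + 1)) ℝ := fun r c =>
  if h : (r.1 : ℕ) + (c : ℕ) < T then ω ⟨(r.1 : ℕ) + (c : ℕ), h⟩ r.2 else 0

/-- A signal is Hankel exciting of order `k` if its depth-`k` block Hankel matrix
has full row rank `q·k`. -/
def HankelExciting {q : ℕ} (T : ℕ) (ω : Fin T → Fin q → ℝ) (k : ℕ) : Prop :=
  (hankelMat T ω k).rank = q * k

/-- The controllability matrix `[B, AB, …, A^{n−1}B]`. -/
noncomputable def ctrbMat {n : ℕ} {ι : Type} [Fintype ι]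
    (A : Matrix (Fin n) (Fin n) ℝ) (B : Matrix (Fin n) ι ℝ) :
    Matrix (Fin n) (Fin n × ι) ℝ :=
  Matrix.of fun i p => (A ^ (p.1 : ℕ) * B) i p.2

/-- The pair `(A, B)` is controllable if the controllability matrix has rank `n`. -/
def Controllable {n : ℕ} {ι : Type} [Fintype ι]
    (A : Matrix (Fin n) (Fin n) ℝ) (B : Matrix (Fin n) ι ℝ) : Prop :=
  (ctrbMat A B).rank = n

/-- `(u, y)` is a length-`L` input/output trajectory of the LTI system
`x(k+1) = A x(k) + B u(k)`, `y(k) = C x(k)`. -/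
def IsTraj {n q p : ℕ} (A : Matrix (Fin n) (Fin n) ℝ) (B : Matrix (Fin n) (Fin q) ℝ)
    (C : Matrix (Fin p) (Fin n) ℝ) (L : ℕ)
    (u : Fin L → Fin q → ℝ) (y : Fin L → Fin p → ℝ) : Prop :=
  ∃ x : Fin (L + 1) → Fin n → ℝ,
    ∀ k : Fin L, x k.succ = A *ᵥ x k.castSucc + B *ᵥ u k ∧ y k = C *ᵥ x k.castSucc

/-- `col(u)`: the column vector obtained by stacking `u(0), …, u(L−1)`. -/
def colVec {L q : ℕ} (u : Fin L → Fin q → ℝ) : Fin L × Fin q → ℝ := fun r => u r.1 r.2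

open Finset

namespace Matrix

variable {K m n : Type*} [Field K] [Fintype m] [Fintype n]

theorem rank_eq_card_iff_forall_vecMul_eq_zero {M : Matrix m n K} :
    M.rank = Fintype.card m ↔ ∀ v : m → K, v ᵥ* M = 0 → v = 0 := by
  have hrows : LinearIndependent K M.row ↔ ∀ v : m → K, v ᵥ* M = 0 → v = 0 := by
    simp only [Fintype.linearIndependent_iff, vecMul_eq_sum, funext_iff]
    rfl
  rw [← hrows]
  refine ⟨fun h => ?_, LinearIndependent.rank_matrix⟩
  rw [linearIndependent_iff_card_eq_finrank_span, Set.finrank, ← h, rank_eq_finrank_span_row]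

theorem mulVec_surjective_of_rank_eq {M : Matrix m n K} (h : M.rank = Fintype.card m) :
    Function.Surjective M.mulVec := by
  have hrange : LinearMap.range M.mulVecLin = ⊤ :=
    Submodule.eq_top_of_finrank_eq (by rw [Module.finrank_fintype_fun_eq_card]; exact h)
  exact LinearMap.range_eq_top.mp hrange

end Matrix

def zeroExtend {V : Type*} [Zero V] {T : ℕ} (f : Fin T → V) (j : ℕ) : V :=
  if h : j < T then f ⟨j, h⟩ else 0

theorem zeroExtend_of_lt {V : Type*} [Zero V] {T j : ℕ} (f : Fin T → V) (h : j < T) :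
    zeroExtend f j = f ⟨j, h⟩ :=
  dif_pos h

theorem zeroExtend_of_le {V : Type*} [Zero V] {T j : ℕ} (f : Fin T → V) (h : T ≤ j) :
    zeroExtend f j = 0 :=
  dif_neg (Nat.not_lt.mpr h)

section StateSeq

variable {R ι κ : Type*} [CommRing R] [Fintype ι] [Fintype κ]

def IsStateSeq (A : Matrix ι ι R) (B : Matrix ι κ R) (T : ℕ) (X : ℕ → ι → R)
    (U : ℕ → κ → R) : Prop :=
  ∀ j < T, X (j + 1) = A *ᵥ X j + B *ᵥ U j

variable {A : Matrix ι ι R} {B : Matrix ι κ R} {T : ℕ} {X : ℕ → ι → R} {U : ℕ → κ → R}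

theorem IsStateSeq.add_eq [DecidableEq ι] (hX : IsStateSeq A B T X U) {j k : ℕ} (h : j + k ≤ T) :
    X (j + k) = A ^ k *ᵥ X j + ∑ b ∈ range k, (A ^ (k - 1 - b) * B) *ᵥ U (j + b) := by
  induction k with
  | zero => simp
  | succ k ih =>
    have hA : ∀ b ∈ range k, A *ᵥ ((A ^ (k - 1 - b) * B) *ᵥ U (j + b))
        = (A ^ (k + 1 - 1 - b) * B) *ᵥ U (j + b) := by
      intro b hb
      rw [mulVec_mulVec, ← Matrix.mul_assoc, ← pow_succ', show k - 1 - b + 1 = k + 1 - 1 - b by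
        simp only [mem_range] at hb; omega]
    rw [← add_assoc, hX _ (by omega), ih (by omega), mulVec_add, mulVec_mulVec, ← pow_succ',
      mulVec_sum, sum_congr rfl hA, sum_range_succ, Nat.add_sub_cancel, Nat.sub_self, pow_zero,
      Matrix.one_mul, add_assoc]

theorem IsStateSeq.eq_of_eq_input {X' : ℕ → ι → R} {U' : ℕ → κ → R} (hX : IsStateSeq A B T X U)
    (hX' : IsStateSeq A B T X' U') (h0 : X 0 = X' 0) (hU : ∀ j < T, U j = U' j) :
    ∀ j ≤ T, X j = X' j := by
  intro j hj
  induction j with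
  | zero => exact h0
  | succ j ih => rw [hX j hj, hX' j hj, ih (by omega), hU j hj]

theorem IsStateSeq.sum_smul_shift {γ : Type*} [Fintype γ] {L : ℕ} (hX : IsStateSeq A B T X U)
    (d : γ → ℕ) (g : γ → R) (hd : ∀ c, d c + L ≤ T) :
    IsStateSeq A B L (fun j => ∑ c, g c • X (d c + j)) (fun j => ∑ c, g c • U (d c + j)) := by
  intro j hj
  simp only [mulVec_sum, mulVec_smul, ← sum_add_distrib, ← smul_add]
  refine sum_congr rfl fun c _ => ?_
  rw [← add_assoc, hX _ (by have := hd c; omega)]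

end StateSeq

theorem eq_zero_of_recurrence {R V : Type*} [Semiring R] [AddCommMonoid V] [Module R V]
    {n N : ℕ} {c : ℕ → R} (hc : c n = 1) {w : ℕ → V} (hw : ∀ b, N ≤ b → w b = 0)
    (hrec : ∀ b < N, ∑ k ∈ range (n + 1), c k • w (b + n - k) = 0) (b : ℕ) : w b = 0 := by
  suffices ∀ m b, N ≤ b + m → w b = 0 from this N b (by omega)
  intro m
  induction m with
  | zero => exact hw
  | succ m ih =>
    intro b hb
    by_cases hNb : N ≤ b
    · exact hw b hNb
    have hrest : ∑ k ∈ range n, c k • w (b + n - k) = 0 :=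
      sum_eq_zero fun k hk => by
        rw [ih _ (by simp only [mem_range] at hk; omega), smul_zero]
    simpa [sum_range_succ, hrest, hc] using hrec b (by omega)

section Hankel

variable {q : ℕ}

theorem hankelMat_eq_zeroExtend (T : ℕ) (ω : Fin T → Fin q → ℝ) (k : ℕ) (r : Fin k × Fin q)
    (c : Fin (T - k + 1)) : hankelMat T ω k r c = zeroExtend ω (r.1 + c) r.2 := by
  unfold hankelMat zeroExtend
  split <;> rfl

theorem vecMul_hankelMat_apply (T : ℕ) (ω : Fin T → Fin q → ℝ) {k : ℕ} (θ : ℕ → Fin q → ℝ)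
    (c : Fin (T - k + 1)) :
    (colVec (fun i : Fin k => θ i) ᵥ* hankelMat T ω k) c
      = ∑ b ∈ range k, θ b ⬝ᵥ zeroExtend ω (b + c) := by
  simp only [vecMul, dotProduct, Fintype.sum_prod_type, colVec, hankelMat_eq_zeroExtend]
  exact Fin.sum_univ_eq_sum_range (fun b => ∑ s, θ b s * zeroExtend ω (b + c) s) k

theorem hankelMat_mulVec_apply (T : ℕ) (ω : Fin T → Fin q → ℝ) {k : ℕ}
    (g : Fin (T - k + 1) → ℝ) (i : Fin k) (s : Fin q) :
    (hankelMat T ω k *ᵥ g) (i, s) = (∑ c, g c • zeroExtend ω (c + i)) s := by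
  simp only [mulVec, dotProduct, hankelMat_eq_zeroExtend, Finset.sum_apply, Pi.smul_apply,
    smul_eq_mul]
  exact sum_congr rfl fun c _ => by rw [mul_comm, add_comm]

end Hankel

def stateMat {n : ℕ} (X : ℕ → Fin n → ℝ) (N : ℕ) : Matrix (Fin n) (Fin N) ℝ :=
  Matrix.of fun i c => X c i

theorem stateMat_mulVec {n N : ℕ} (X : ℕ → Fin n → ℝ) (g : Fin N → ℝ) :
    stateMat X N *ᵥ g = ∑ c, g c • X c := by
  ext i
  simp [stateMat, mulVec, dotProduct, Finset.sum_apply, mul_comm]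

section LeftKernel

variable {n q : ℕ} {A : Matrix (Fin n) (Fin n) ℝ} {B : Matrix (Fin n) (Fin q) ℝ}

variable (A B) in
/-- `b ↦ dualSeq A B η Ξ (b + n - k)` on `b < L + n` is the row vector `θ_k` of the proof idea,
with `ξ` read as the sequence `Ξ`. -/
def dualSeq (η : Fin n → ℝ) (Ξ : ℕ → Fin q → ℝ) (b : ℕ) : Fin q → ℝ :=
  if b < n then η ᵥ* (A ^ (n - 1 - b) * B) else Ξ (b - n)

variable {T L : ℕ} {X : ℕ → Fin n → ℝ} {U : ℕ → Fin q → ℝ} {η : Fin n → ℝ}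
  {Ξ : ℕ → Fin q → ℝ}

theorem sum_dualSeq_dotProduct (hX : IsStateSeq A B T X U) (hΞ : ∀ i, L ≤ i → Ξ i = 0)
    (hker : ∀ j, j + L ≤ T → ∑ i ∈ range L, Ξ i ⬝ᵥ U (i + j) + η ⬝ᵥ X j = 0)
    {k j : ℕ} (hk : k ≤ n) (hj : j + k + L ≤ T) :
    ∑ b ∈ range (L + n), dualSeq A B η Ξ (b + n - k) ⬝ᵥ U (b + j)
      = -(η ⬝ᵥ (A ^ k *ᵥ X j)) := by
  have hinput : ∑ b ∈ range k, dualSeq A B η Ξ (b + n - k) ⬝ᵥ U (b + j)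
      = η ⬝ᵥ (X (j + k) - A ^ k *ᵥ X j) := by
    rw [hX.add_eq (by omega), add_sub_cancel_left, dotProduct_sum]
    refine sum_congr rfl fun b hb => ?_
    simp only [mem_range] at hb
    rw [dualSeq, if_pos (by omega), ← dotProduct_mulVec,
      show n - 1 - (b + n - k) = k - 1 - b by omega, add_comm b j]
  have hpast : ∑ i ∈ range (L + (n - k)), dualSeq A B η Ξ (k + i + n - k) ⬝ᵥ U (k + i + j)
      = -(η ⬝ᵥ X (j + k)) := by
    have hshift : ∀ i, dualSeq A B η Ξ (k + i + n - k) = Ξ i := fun i => by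
      rw [dualSeq, if_neg (by omega), show k + i + n - k - n = i by omega]
    rw [sum_range_add, eq_neg_iff_add_eq_zero, ← hker (j + k) (by omega)]
    simp only [hshift, hΞ (L + _) (Nat.le_add_right _ _), zero_dotProduct, sum_const_zero,
      add_zero]
    congr 1
    exact sum_congr rfl fun i _ => by rw [show k + i + j = i + (j + k) by omega]
  rw [show L + n = k + (L + (n - k)) by omega, sum_range_add, hinput, hpast, dotProduct_sub]
  ring

theorem sum_charpoly_dualSeq_dotProduct (hX : IsStateSeq A B T X U)
    (hΞ : ∀ i, L ≤ i → Ξ i = 0)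
    (hker : ∀ j, j + L ≤ T → ∑ i ∈ range L, Ξ i ⬝ᵥ U (i + j) + η ⬝ᵥ X j = 0)
    {j : ℕ} (hj : j + L + n ≤ T) :
    ∑ b ∈ range (L + n),
      (∑ k ∈ range (n + 1), A.charpoly.coeff k • dualSeq A B η Ξ (b + n - k)) ⬝ᵥ U (b + j)
      = 0 := by
  have hCH : ∑ k ∈ range (n + 1), A.charpoly.coeff k • A ^ k = 0 := by
    rw [← aeval_self_charpoly A, Polynomial.aeval_eq_sum_range' (n := n + 1) (by simp)]
  calc _ = ∑ k ∈ range (n + 1), A.charpoly.coeff k *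
          ∑ b ∈ range (L + n), dualSeq A B η Ξ (b + n - k) ⬝ᵥ U (b + j) := by
        simp only [sum_dotProduct, smul_dotProduct, mul_sum, smul_eq_mul]
        exact sum_comm
    _ = -(η ⬝ᵥ ((∑ k ∈ range (n + 1), A.charpoly.coeff k • A ^ k) *ᵥ X j)) := by
        rw [sum_mulVec, dotProduct_sum, ← sum_neg_distrib]
        refine sum_congr rfl fun k hk => ?_
        simp only [mem_range] at hk
        rw [sum_dualSeq_dotProduct hX hΞ hker (by omega) (by omega), smul_mulVec,
          dotProduct_smul, smul_eq_mul, mul_neg]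
    _ = 0 := by rw [hCH, zero_mulVec, dotProduct_zero, neg_zero]

theorem dualSeq_eq_zero {ud : Fin T → Fin q → ℝ} (hexc : HankelExciting T ud (L + n))
    (hLT : L + n ≤ T) (hX : IsStateSeq A B T X (zeroExtend ud)) (hΞ : ∀ i, L ≤ i → Ξ i = 0)
    (hker : ∀ j, j + L ≤ T → ∑ i ∈ range L, Ξ i ⬝ᵥ zeroExtend ud (i + j) + η ⬝ᵥ X j = 0)
    (b : ℕ) : dualSeq A B η Ξ b = 0 := by
  have hrows := Matrix.rank_eq_card_iff_forall_vecMul_eq_zero.mp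
    (by rw [hexc]; simp [mul_comm] : (hankelMat T ud (L + n)).rank = _)
  have hθ := hrows
    (colVec fun i : Fin (L + n) =>
      ∑ k ∈ range (n + 1), A.charpoly.coeff k • dualSeq A B η Ξ (i + n - k))
    (funext fun j => (vecMul_hankelMat_apply T ud (fun b =>
      ∑ k ∈ range (n + 1), A.charpoly.coeff k • dualSeq A B η Ξ (b + n - k)) j).trans
        (sum_charpoly_dualSeq_dotProduct hX hΞ hker (by omega)))
  have hmonic : A.charpoly.coeff n = 1 := by
    simpa using A.charpoly_monic.coeff_natDegree
  refine eq_zero_of_recurrence (N := L + n) hmonic (fun b hb => ?_) (fun b hb => ?_) b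
  · rw [dualSeq, if_neg (by omega), hΞ _ (by omega)]
  · exact funext fun s => congrFun hθ (⟨b, hb⟩, s)

end LeftKernel

theorem rank_fromRows_hankelMat_stateMat {n q T L : ℕ} {A : Matrix (Fin n) (Fin n) ℝ}
    {B : Matrix (Fin n) (Fin q) ℝ} {X : ℕ → Fin n → ℝ} {ud : Fin T → Fin q → ℝ}
    (hctrb : Controllable A B) (hexc : HankelExciting T ud (L + n)) (hLT : L + n ≤ T)
    (hX : IsStateSeq A B T X (zeroExtend ud)) :
    (fromRows (hankelMat T ud L) (stateMat X (T - L + 1))).rank = q * L + n := by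
  rw [show q * L + n = Fintype.card (Fin L × Fin q ⊕ Fin n) by simp [mul_comm],
    Matrix.rank_eq_card_iff_forall_vecMul_eq_zero]
  intro v hv
  rw [vecMul_fromRows] at hv
  set ξ := v ∘ Sum.inl
  set η := v ∘ Sum.inr
  set Ξ : ℕ → Fin q → ℝ := zeroExtend (Function.curry ξ)
  have hξ : colVec (fun i : Fin L => Ξ i) = ξ := by
    ext ⟨i, s⟩
    simp [colVec, Ξ, zeroExtend_of_lt]
  have hker : ∀ j, j + L ≤ T → ∑ i ∈ range L, Ξ i ⬝ᵥ zeroExtend ud (i + j) + η ⬝ᵥ X j = 0 := by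
    intro j hj
    have hcol := congrFun hv ⟨j, by omega⟩
    rwa [Pi.add_apply, ← hξ, vecMul_hankelMat_apply] at hcol
  have hw := dualSeq_eq_zero hexc hLT hX (fun i hi => zeroExtend_of_le _ hi) hker
  have hξ0 : ξ = 0 := by
    ext ⟨i, s⟩
    simpa [dualSeq, Ξ, zeroExtend_of_lt] using congrFun (hw (i + n)) s
  have hη0 : η = 0 := by
    refine Matrix.rank_eq_card_iff_forall_vecMul_eq_zero.mp
      (by rw [Fintype.card_fin]; exact hctrb) η ?_
    ext ⟨m, s⟩
    have hm := congrFun (hw (n - 1 - m)) s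
    rwa [dualSeq, if_pos (by omega), show n - 1 - (n - 1 - m) = m by omega] at hm
  ext (i | i)
  exacts [congrFun hξ0 i, congrFun hη0 i]

theorem IsTraj.exists_isStateSeq {n q p T : ℕ} {A : Matrix (Fin n) (Fin n) ℝ}
    {B : Matrix (Fin n) (Fin q) ℝ} {C : Matrix (Fin p) (Fin n) ℝ} {u : Fin T → Fin q → ℝ}
    {y : Fin T → Fin p → ℝ} (h : IsTraj A B C T u y) :
    ∃ X : ℕ → Fin n → ℝ, IsStateSeq A B T X (zeroExtend u) ∧ ∀ j : Fin T, y j = C *ᵥ X j := by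
  obtain ⟨x, hx⟩ := h
  refine ⟨zeroExtend x, fun j hj => ?_, fun j => ?_⟩
  · rw [zeroExtend_of_lt _ (by omega), zeroExtend_of_lt _ (by omega), zeroExtend_of_lt _ hj]
    exact (hx ⟨j, hj⟩).1
  · rw [zeroExtend_of_lt _ (by omega)]
    exact (hx j).2

theorem hankelMat_mulVec_output_eq_colVec {n q p T L : ℕ} {A : Matrix (Fin n) (Fin n) ℝ}
    {B : Matrix (Fin n) (Fin q) ℝ} {C : Matrix (Fin p) (Fin n) ℝ}
    {ud : Fin T → Fin q → ℝ} {yd : Fin T → Fin p → ℝ} {u : Fin L → Fin q → ℝ}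
    {y : Fin L → Fin p → ℝ} {Xd Xt : ℕ → Fin n → ℝ} {g : Fin (T - L + 1) → ℝ} (hLT : L ≤ T)
    (hXd : IsStateSeq A B T Xd (zeroExtend ud)) (hyd : ∀ j : Fin T, yd j = C *ᵥ Xd j)
    (hXt : IsStateSeq A B L Xt (zeroExtend u)) (hy : ∀ j : Fin L, y j = C *ᵥ Xt j)
    (hgu : hankelMat T ud L *ᵥ g = colVec u) (hgx : stateMat Xd (T - L + 1) *ᵥ g = Xt 0) :
    hankelMat T yd L *ᵥ g = colVec y := by
  have hcomb := hXd.sum_smul_shift (L := L) (fun c : Fin (T - L + 1) => (c : ℕ)) g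
    (fun c => by omega)
  have hinput : ∀ j < L, ∑ c, g c • zeroExtend ud (c + j) = zeroExtend u j := by
    intro j hj
    ext s
    rw [← hankelMat_mulVec_apply T ud g ⟨j, hj⟩ s, hgu, zeroExtend_of_lt _ hj]
    rfl
  have hstate := hcomb.eq_of_eq_input hXt (by simpa [stateMat_mulVec] using hgx) hinput
  ext ⟨i, s⟩
  rw [hankelMat_mulVec_apply, colVec, hy, ← hstate i i.2.le, mulVec_sum]
  refine congrFun (sum_congr rfl fun c _ => ?_) s
  rw [mulVec_smul, zeroExtend_of_lt _ (by omega), hyd]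

theorem stmt0_general {n q p T : ℕ}
    (A : Matrix (Fin n) (Fin n) ℝ) (B : Matrix (Fin n) (Fin q) ℝ)
    (C : Matrix (Fin p) (Fin n) ℝ)
    (hctrb : Controllable A B)
    (ud : Fin T → Fin q → ℝ) (yd : Fin T → Fin p → ℝ)
    (hd : IsTraj A B C T ud yd)
    (L : ℕ) (hLT : L + n ≤ T)
    (hexc : HankelExciting T ud (L + n)) :
    ∀ (u : Fin L → Fin q → ℝ) (y : Fin L → Fin p → ℝ),
      IsTraj A B C L u y →
      ∃ g : Fin (T - L + 1) → ℝ,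
        hankelMat T ud L *ᵥ g = colVec u ∧ hankelMat T yd L *ᵥ g = colVec y := by
  intro u y hu
  obtain ⟨Xd, hXd, hyd⟩ := hd.exists_isStateSeq
  obtain ⟨Xt, hXt, hy⟩ := hu.exists_isStateSeq
  have hrank := rank_fromRows_hankelMat_stateMat hctrb hexc hLT hXd
  obtain ⟨g, hg⟩ := Matrix.mulVec_surjective_of_rank_eq (hrank.trans (by simp [mul_comm]))
    (Sum.elim (colVec u) (Xt 0))
  rw [fromRows_mulVec] at hg
  have hgu : hankelMat T ud L *ᵥ g = colVec u := funext fun r => congrFun hg (Sum.inl r)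
  have hgx : stateMat Xd (T - L + 1) *ᵥ g = Xt 0 := funext fun i => congrFun hg (Sum.inr i)
  exact ⟨g, hgu, hankelMat_mulVec_output_eq_colVec (by omega) hXd hyd hXt hy hgu hgx⟩

/-- Willems' fundamental lemma, Hankel matrix version.
If `(A, B)` is controllable, `(u^d, y^d)` is a length-`T` trajectory of the system,
`1 ≤ L`, `L + n ≤ T`, and `u^d` is Hankel exciting of order `L + n`, then every
length-`L` trajectory `(u, y)` of the system can be constructed as
`𝓗_L(u^d) g = col(u)`, `𝓗_L(y^d) g = col(y)` for some `g ∈ ℝ^{T−L+1}`. -/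
theorem stmt0 {n q p T : ℕ}
    (A : Matrix (Fin n) (Fin n) ℝ) (B : Matrix (Fin n) (Fin q) ℝ)
    (C : Matrix (Fin p) (Fin n) ℝ)
    (hctrb : Controllable A B)
    (ud : Fin T → Fin q → ℝ) (yd : Fin T → Fin p → ℝ)
    (hd : IsTraj A B C T ud yd)
    (L : ℕ) (hL : 1 ≤ L) (hLT : L + n ≤ T)
    (hexc : HankelExciting T ud (L + n)) :
    ∀ (u : Fin L → Fin q → ℝ) (y : Fin L → Fin p → ℝ),
      IsTraj A B C L u y →
      ∃ g : Fin (T - L + 1) → ℝ,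
        hankelMat T ud L *ᵥ g = colVec u ∧ hankelMat T yd L *ᵥ g = colVec y :=
  stmt0_general A B C hctrb ud yd hd L hLT hexc
end

section
/- Consider the discrete-time affine system x(k+1) = A x(k) + B̄ ū(k) + H ε(k) + L̄, ȳ(k) = C̄ x(k) + L_y with A ∈ ℝ^{n×n}, B̄ ∈ ℝ^{n×m}, H ∈ ℝ^{n×1}, C̄ ∈ ℝ^{p×n}, L̄ ∈ ℝ^n, L_y ∈ ℝ^p, and assume the pair (A, [B̄ H]) is controllable. Let (ū^d, ε^d, ȳ^d) be a length-T trajectory of this system, and let û^d denote the combined input signal obtained by stacking ū^d(k) and ε^d(k) into a vector in ℝ^{m+1} at each time k. Let L ≥ 1. If û^d is Hankel exciting of order L + n + 1, then for every length-L trajectory (ū, ε, ȳ) of the system there exists ḡ ∈ ℝ^{T−L+1} such that 𝓗_L(ū^d) ḡ = col(ū), 𝓗_L(ε^d) ḡ = col(ε), 𝓗_L(ȳ^d) ḡ = col(ȳ), and 1ᵀ ḡ = 1 (where 1 is the all-ones vector in ℝ^{T−L+1}). -/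
open Matrix

/-- `(ū, ε, ȳ)` is a length-`L` trajectory of the affine system
`x(k+1) = A x(k) + B̄ ū(k) + H ε(k) + L̄`, `ȳ(k) = C̄ x(k) + L_y`. -/
def IsAffTraj {n m p : ℕ} (A : Matrix (Fin n) (Fin n) ℝ) (Bb : Matrix (Fin n) (Fin m) ℝ)
    (H : Fin n → ℝ) (Cb : Matrix (Fin p) (Fin n) ℝ) (Lb : Fin n → ℝ) (Ly : Fin p → ℝ)
    (L : ℕ) (u : Fin L → Fin m → ℝ) (ε : Fin L → ℝ) (y : Fin L → Fin p → ℝ) : Prop :=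
  ∃ x : Fin (L + 1) → Fin n → ℝ,
    ∀ k : Fin L,
      x k.succ = A *ᵥ x k.castSucc + Bb *ᵥ u k + ε k • H + Lb ∧
      y k = Cb *ᵥ x k.castSucc + Ly

/-!
Appending the constant `1` to the state turns the affine system into a linear one with `n + 1`
states (`homogenize`), the offsets `L̄`, `L_y` becoming a column of the state and output matrices.
For that system we run Willems' argument. If a row `(η, ξ)` annihilates the data matrix
`[𝓗_L(û); X]`, multiplying it by the characteristic polynomial `χ` of the `(n+1)`-state matrix
`Â` yields, by Cayley–Hamilton, a row annihilating `𝓗_{L+n+1}(û)`; by excitation that row is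
zero, and as `χ` is monic this forces `η = 0` and `ξ Âᵉ B̂ = 0` for `e ≤ n`. Controllability of
`(A, [B̄ H])` kills the state part of `ξ`, and the relation at time `0`, where the extra coordinate
is `1`, kills the rest. So `[𝓗_L(û); X]` has full row rank, and `ḡ` solving
`[𝓗_L(û); X] ḡ = (col û, x(0), 1)` combines shifted data into a trajectory with the same initial
state and input as the given one, hence the same states and outputs; the last coordinate gives
`1ᵀ ḡ = 1`.
-/

open Finset

theorem Matrix.vecMul_injective_of_rank_eq_card {m n K : Type*} [Fintype m] [Fintype n] [Field K]
    {M : Matrix m n K} (h : M.rank = Fintype.card m) : Function.Injective M.vecMul := by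
  rw [Matrix.vecMul_injective_iff, linearIndependent_iff_card_eq_finrank_span, Set.finrank,
    ← rank_eq_finrank_span_row, h]

theorem Matrix.mulVec_surjective_of_vecMul_injective {m n K : Type*} [Fintype m] [Fintype n]
    [Field K] {M : Matrix m n K} (h : Function.Injective M.vecMul) :
    Function.Surjective M.mulVec := by
  have hrank : M.rank = Fintype.card m := (Matrix.vecMul_injective_iff.mp h).rank_matrix
  refine LinearMap.range_eq_top.mp
    (Submodule.eq_top_of_finrank_eq (S := LinearMap.range M.mulVecLin) ?_)
  rw [← Matrix.rank, hrank, Module.finrank_fintype_fun_eq_card]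

theorem Controllable.eq_zero_of_vecMul {n : ℕ} {ι : Type} [Fintype ι] {A : Matrix (Fin n) (Fin n) ℝ}
    {B : Matrix (Fin n) ι ℝ} (h : Controllable A B) {ξ : Fin n → ℝ}
    (hξ : ∀ e < n, ξ ᵥ* (A ^ e * B) = 0) : ξ = 0 := by
  refine Matrix.vecMul_injective_of_rank_eq_card (M := ctrbMat A B) (by rw [h, Fintype.card_fin]) ?_
  change ξ ᵥ* ctrbMat A B = 0 ᵥ* ctrbMat A B
  rw [zero_vecMul]
  funext ⟨e, j⟩
  exact congrFun (hξ e e.isLt) j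

theorem controllable_submatrix_equiv_iff {n : ℕ} {ι κ : Type} [Fintype ι] [Fintype κ]
    {A : Matrix (Fin n) (Fin n) ℝ} {B : Matrix (Fin n) ι ℝ} (e : κ ≃ ι) :
    Controllable A (B.submatrix id e) ↔ Controllable A B := by
  have : ctrbMat A (B.submatrix id e) =
      (ctrbMat A B).submatrix (Equiv.refl _) ((Equiv.refl _).prodCongr e) := rfl
  rw [Controllable, Controllable, this, rank_submatrix]

def IsLinTraj {σ μ : Type*} [Fintype σ] [Fintype μ] (A : Matrix σ σ ℝ) (B : Matrix σ μ ℝ)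
    (u : ℕ → μ → ℝ) (x : ℕ → σ → ℝ) : Prop :=
  ∀ t, x (t + 1) = A *ᵥ x t + B *ᵥ u t

def hankel {μ : Type*} (u : ℕ → μ → ℝ) (K J : ℕ) : Matrix (Fin K × μ) (Fin J) ℝ :=
  Matrix.of fun r c => u (r.1 + c) r.2

def trajMatrix {σ μ : Type*} (u : ℕ → μ → ℝ) (x : ℕ → σ → ℝ) (L J : ℕ) :
    Matrix ((Fin L × μ) ⊕ σ) (Fin J) ℝ :=
  Matrix.fromRows (hankel u L J) (Matrix.of fun i c => x c i)

section LinearSystem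

variable {σ μ : Type*} [Fintype σ] [Fintype μ] {A : Matrix σ σ ℝ} {B : Matrix σ μ ℝ}
  {u : ℕ → μ → ℝ} {x : ℕ → σ → ℝ}

theorem IsLinTraj.apply_add [DecidableEq σ] (hx : IsLinTraj A B u x) (j i : ℕ) :
    x (j + i) = A ^ i *ᵥ x j + ∑ l ∈ range i, (A ^ (i - 1 - l) * B) *ᵥ u (j + l) := by
  induction i generalizing j with
  | zero => simp
  | succ i ih =>
    rw [show j + (i + 1) = j + 1 + i by ring, ih, hx, sum_range_succ', mulVec_add, mulVec_mulVec,
      mulVec_mulVec, ← pow_succ]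
    simp only [Nat.add_sub_cancel, Nat.sub_zero, add_zero, Nat.sub_sub, add_comm 1, add_assoc]
    abel

theorem IsLinTraj.sum_smul_shift (hx : IsLinTraj A B u x) {ι : Type*} [Fintype ι] (g : ι → ℝ)
    (d : ι → ℕ) :
    IsLinTraj A B (fun t => ∑ c, g c • u (t + d c)) (fun t => ∑ c, g c • x (t + d c)) := by
  intro t
  simp only [mulVec_sum, mulVec_smul, ← sum_add_distrib, ← smul_add]
  refine sum_congr rfl fun c _ => ?_
  rw [show t + 1 + d c = t + d c + 1 by ring, hx]

theorem IsLinTraj.state_eq_of_input_eq {u' : ℕ → μ → ℝ} {x' : ℕ → σ → ℝ} (hx : IsLinTraj A B u x)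
    (hx' : IsLinTraj A B u' x') (h0 : x 0 = x' 0) {L : ℕ} (hu : ∀ t < L, u t = u' t) :
    ∀ t ≤ L, x t = x' t := by
  intro t
  induction t with
  | zero => exact fun _ => h0
  | succ t ih => intro ht; rw [hx, hx', ih (by omega), hu t (by omega)]

theorem vecMul_hankel (r : ℕ → μ → ℝ) (K J : ℕ) :
    (fun p : Fin K × μ => r p.1 p.2) ᵥ* hankel u K J =
      fun j : Fin J => ∑ s ∈ range K, r s ⬝ᵥ u (s + j) := by
  funext j
  rw [← Fin.sum_univ_eq_sum_range (fun s => r s ⬝ᵥ u (s + j))]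
  simp only [vecMul, dotProduct, Fintype.sum_prod_type, hankel, of_apply]

theorem IsLinTraj.sum_smul_shift_eq_of_trajMatrix_mulVec {ud : ℕ → μ → ℝ} {xd : ℕ → σ → ℝ}
    (hxd : IsLinTraj A B ud xd) (hx : IsLinTraj A B u x) {L J : ℕ} {g : Fin J → ℝ}
    (hg : trajMatrix ud xd L J *ᵥ g = Sum.elim (fun p => u p.1 p.2) (x 0)) :
    ∀ t ≤ L, ∑ c, g c • xd (t + c) = x t := by
  rw [trajMatrix, fromRows_mulVec] at hg
  refine (hxd.sum_smul_shift g Fin.val).state_eq_of_input_eq hx ?_ fun t ht => ?_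
  · funext i
    simpa [mulVec, dotProduct, mul_comm] using congrFun hg (Sum.inr i)
  · funext ρ
    simpa [hankel, mulVec, dotProduct, mul_comm] using congrFun hg (Sum.inl (⟨t, ht⟩, ρ))

end LinearSystem

/-- The coefficient of `z ^ s` in the polynomial part of `q(z) (η(z) + ∑ₑ cₑ z^{-e-1})`,
where `q(z) = ∑_{i ≤ N} aᵢ zⁱ`. -/
def polyPartMul {V : Type*} [AddCommGroup V] [Module ℝ V] (a : ℕ → ℝ) (N : ℕ) (η c : ℕ → V)
    (s : ℕ) : V :=
  ∑ i ∈ range (N + 1), a i • ((if i ≤ s then η (s - i) else 0) + if s < i then c (i - 1 - s) else 0)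

theorem eq_zero_of_polyPartMul_eq_zero {V : Type*} [AddCommGroup V] [Module ℝ V] {a : ℕ → ℝ}
    {N L : ℕ} (ha : a N = 1) {η c : ℕ → V} (hη : ∀ k ≥ L, η k = 0)
    (hw : ∀ s < L + N, polyPartMul a N η c s = 0) : (∀ k, η k = 0) ∧ ∀ e < N, c e = 0 := by
  -- As `a N = 1`, coefficient `k + N` expresses `η k` through `η` at larger indices, and
  -- coefficient `N - 1 - e` expresses `c e` through `c` at smaller ones.
  have hη0 : ∀ k, η k = 0 := by
    suffices ∀ d k, L ≤ k + d → η k = 0 from fun k => this L k (by omega)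
    intro d
    induction d with
    | zero => exact fun k hk => hη k hk
    | succ d ih =>
      intro k hk
      by_cases hkL : L ≤ k
      · exact hη k hkL
      have h := hw (k + N) (by omega)
      rw [polyPartMul, sum_range_succ, sum_eq_zero fun i hi => ?_] at h
      · simpa [ha] using h
      · rw [mem_range] at hi
        rw [if_pos (by omega), if_neg (by omega), ih _ (by omega), add_zero, smul_zero]
  refine ⟨hη0, fun e he => ?_⟩
  induction e using Nat.strong_induction_on with
  | _ e ih =>
    have h := hw (N - 1 - e) (by omega)
    rw [polyPartMul, sum_range_succ, sum_eq_zero fun i hi => ?_] at h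
    · rwa [hη0, ite_self, zero_add, if_pos (by omega), ha, one_smul, zero_add,
        show N - 1 - (N - 1 - e) = e by omega] at h
    · rw [mem_range] at hi
      rw [hη0, ite_self, zero_add]
      split_ifs with hlt
      · rw [ih _ (by omega) (by omega), smul_zero]
      · rw [smul_zero]

section Willems

variable {σ μ : Type*} [Fintype σ] [Fintype μ] [DecidableEq σ] {A : Matrix σ σ ℝ}
  {B : Matrix σ μ ℝ} {u : ℕ → μ → ℝ} {x : ℕ → σ → ℝ}

theorem sum_range_shift_dotProduct {L N i : ℕ} (hi : i ≤ N) {η : ℕ → μ → ℝ}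
    (hη : ∀ k ≥ L, η k = 0) (v : ℕ → μ → ℝ) :
    ∑ s ∈ range (L + N), (if i ≤ s then η (s - i) else 0) ⬝ᵥ v s =
      ∑ k ∈ range L, η k ⬝ᵥ v (i + k) := by
  rw [show L + N = i + (L + (N - i)) by omega, sum_range_add, sum_range_add,
    sum_eq_zero (s := range i) fun s hs => by rw [if_neg (by have := mem_range.mp hs; omega), zero_dotProduct],
    sum_eq_zero (s := range (N - i)) fun k _ => by
      rw [if_pos (by omega), hη _ (by omega), zero_dotProduct]]
  simp

theorem sum_range_tail_dotProduct {L N i : ℕ} (hi : i ≤ N) (c : ℕ → μ → ℝ) (v : ℕ → μ → ℝ) :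
    ∑ s ∈ range (L + N), (if s < i then c (i - 1 - s) else 0) ⬝ᵥ v s =
      ∑ s ∈ range i, c (i - 1 - s) ⬝ᵥ v s := by
  rw [show L + N = i + (L + N - i) by omega, sum_range_add,
    sum_eq_zero (s := range (L + N - i)) fun k _ => by rw [if_neg (by omega), zero_dotProduct],
    add_zero]
  exact sum_congr rfl fun s hs => by rw [if_pos (by simpa using hs)]

theorem IsLinTraj.sum_polyPartMul_dotProduct (hx : IsLinTraj A B u x) {N L : ℕ} {a : ℕ → ℝ}
    (ha : ∑ i ∈ range (N + 1), a i • A ^ i = 0) {η : ℕ → μ → ℝ} (hη : ∀ k ≥ L, η k = 0)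
    {ξ : σ → ℝ} {j : ℕ}
    (hrel : ∀ i ≤ N, ∑ k ∈ range L, η k ⬝ᵥ u (k + (j + i)) + ξ ⬝ᵥ x (j + i) = 0) :
    ∑ s ∈ range (L + N), polyPartMul a N η (fun e => ξ ᵥ* (A ^ e * B)) s ⬝ᵥ u (s + j) = 0 := by
  have hterm : ∀ i ∈ range (N + 1),
      ∑ s ∈ range (L + N), ((if i ≤ s then η (s - i) else 0) +
        if s < i then ξ ᵥ* (A ^ (i - 1 - s) * B) else 0) ⬝ᵥ u (s + j) =
        -(ξ ⬝ᵥ (A ^ i *ᵥ x j)) := by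
    intro i hi
    have hiN : i ≤ N := Nat.lt_succ_iff.mp (mem_range.mp hi)
    have hshift : ∑ k ∈ range L, η k ⬝ᵥ u (i + k + j) = -(ξ ⬝ᵥ x (j + i)) := by
      simp only [show ∀ k, i + k + j = k + (j + i) from fun k => by ring]
      linarith [hrel i hiN]
    have htail : ∑ s ∈ range i, ξ ᵥ* (A ^ (i - 1 - s) * B) ⬝ᵥ u (s + j) =
        ξ ⬝ᵥ (x (j + i) - A ^ i *ᵥ x j) := by
      rw [hx.apply_add j i, add_sub_cancel_left, dotProduct_sum]
      exact sum_congr rfl fun l _ => by rw [dotProduct_mulVec, add_comm l]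
    simp only [add_dotProduct, sum_add_distrib]
    rw [sum_range_shift_dotProduct hiN hη,
      sum_range_tail_dotProduct hiN (fun e => ξ ᵥ* (A ^ e * B)),
      hshift, htail, dotProduct_sub]
    ring
  simp only [polyPartMul, sum_dotProduct, smul_dotProduct]
  rw [sum_comm]
  simp only [← smul_sum]
  rw [sum_congr rfl fun i hi => by rw [hterm i hi]]
  calc ∑ i ∈ range (N + 1), a i • -(ξ ⬝ᵥ A ^ i *ᵥ x j)
      = -(ξ ⬝ᵥ (∑ i ∈ range (N + 1), a i • A ^ i) *ᵥ x j) := by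
        simp [Matrix.sum_mulVec, Matrix.smul_mulVec, dotProduct_sum, dotProduct_smul]
    _ = 0 := by rw [ha, zero_mulVec, dotProduct_zero, neg_zero]

theorem IsLinTraj.left_kernel (hx : IsLinTraj A B u x) {L J : ℕ}
    (hpe : Function.Injective (hankel u (L + Fintype.card σ) J).vecMul) {η : ℕ → μ → ℝ}
    (hη : ∀ k ≥ L, η k = 0) {ξ : σ → ℝ}
    (hrel : ∀ t < J + Fintype.card σ, ∑ k ∈ range L, η k ⬝ᵥ u (k + t) + ξ ⬝ᵥ x t = 0) :
    (∀ k, η k = 0) ∧ ∀ e < Fintype.card σ, ξ ᵥ* (A ^ e * B) = 0 := by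
  set N := Fintype.card σ
  have hdeg : A.charpoly.natDegree = N := A.charpoly_natDegree_eq_dim
  have ha : ∑ i ∈ range (N + 1), A.charpoly.coeff i • A ^ i = 0 := by
    rw [← hdeg, ← Polynomial.aeval_eq_sum_range, Matrix.aeval_self_charpoly]
  -- By Cayley–Hamilton, multiplying the annihilating row by `χ_A` gives one of `𝓗_{L+N}(u)`.
  have hw : (fun p : Fin (L + N) × μ =>
      polyPartMul A.charpoly.coeff N η (fun e => ξ ᵥ* (A ^ e * B)) p.1 p.2) ᵥ* hankel u (L + N) J =
        0 ᵥ* hankel u (L + N) J := by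
    rw [vecMul_hankel, zero_vecMul]
    funext j
    exact hx.sum_polyPartMul_dotProduct ha hη fun i hi => hrel _ (by omega)
  refine eq_zero_of_polyPartMul_eq_zero (hdeg ▸ A.charpoly_monic.coeff_natDegree) hη
    fun s hs => funext fun ρ => congrFun (hpe hw) (⟨s, hs⟩, ρ)

end Willems

def homogenize {σ : Type*} (A : Matrix σ σ ℝ) (c : σ → ℝ) : Matrix (σ ⊕ Fin 1) (σ ⊕ Fin 1) ℝ :=
  Matrix.fromBlocks A (Matrix.of fun i _ => c i) 0 1

def homogenizeTraj {σ : Type*} (x : ℕ → σ → ℝ) : ℕ → σ ⊕ Fin 1 → ℝ :=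
  fun t => Sum.elim (x t) 1

section Homogenize

variable {σ μ : Type*} [Fintype σ] {A : Matrix σ σ ℝ} {c : σ → ℝ}

theorem homogenize_pow [DecidableEq σ] (e : ℕ) :
    ∃ Y, homogenize A c ^ e = Matrix.fromBlocks (A ^ e) Y 0 1 := by
  induction e with
  | zero => exact ⟨0, by simp [homogenize, fromBlocks_one]⟩
  | succ e ih =>
    obtain ⟨Y, hY⟩ := ih
    refine ⟨A ^ e * Matrix.of (fun i _ => c i) + Y, ?_⟩
    rw [pow_succ, hY, homogenize, fromBlocks_multiply]
    simp [pow_succ]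

theorem vecMul_homogenize_pow_vecMul_fromRows [DecidableEq σ] (B : Matrix σ μ ℝ)
    (ξ : σ ⊕ Fin 1 → ℝ) (e : ℕ) :
    ξ ᵥ* homogenize A c ^ e ᵥ* Matrix.fromRows B 0 = (ξ ∘ Sum.inl) ᵥ* A ^ e ᵥ* B := by
  obtain ⟨Y, hY⟩ := homogenize_pow (A := A) (c := c) e
  rw [hY, vecMul_fromBlocks, sumElim_vecMul_fromRows]
  simp

theorem isLinTraj_homogenize [Fintype μ] {B : Matrix σ μ ℝ} {u : ℕ → μ → ℝ} {x : ℕ → σ → ℝ}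
    (hx : ∀ t, x (t + 1) = A *ᵥ x t + B *ᵥ u t + c) :
    IsLinTraj (homogenize A c) (Matrix.fromRows B 0) u (homogenizeTraj x) := by
  have hc : (Matrix.of fun i (_ : Fin 1) => c i) *ᵥ 1 = c := by
    ext i
    simp [mulVec, dotProduct]
  intro t
  rw [homogenizeTraj, homogenizeTraj, homogenize, fromBlocks_mulVec, fromRows_mulVec, hx,
    Sum.elim_comp_inl, Sum.elim_comp_inr, hc, zero_mulVec, one_mulVec, zero_mulVec, zero_add]
  ext (i | i)
  · simp only [Pi.add_apply, Sum.elim_inl]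
    ring
  · simp

end Homogenize

theorem IsLinTraj.trajMatrix_vecMul_injective_of_homogenize {n : ℕ} {ι : Type} [Fintype ι]
    {A : Matrix (Fin n) (Fin n) ℝ} {B : Matrix (Fin n) ι ℝ} {c : Fin n → ℝ} (hAB : Controllable A B)
    {u : ℕ → ι → ℝ} {x : ℕ → Fin n → ℝ}
    (hx : IsLinTraj (homogenize A c) (Matrix.fromRows B 0) u (homogenizeTraj x))
    {L J J' : ℕ} (hpe : Function.Injective (hankel u (L + (n + 1)) J).vecMul)
    (hJ : J + (n + 1) ≤ J') :
    Function.Injective (trajMatrix u (homogenizeTraj x) L J').vecMul := by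
  have hcard : Fintype.card (Fin n ⊕ Fin 1) = n + 1 := by simp
  refine (injective_iff_map_eq_zero (vecMulLinear (trajMatrix u (homogenizeTraj x) L J'))).mpr
    fun v hv => ?_
  change v ᵥ* _ = 0 at hv
  set η : ℕ → ι → ℝ := fun k ρ => if h : k < L then v (Sum.inl (⟨k, h⟩, ρ)) else 0
  set ξ := v ∘ Sum.inr
  have hv' : v = Sum.elim (fun p => η p.1 p.2) ξ := by
    ext (⟨k, ρ⟩ | i) <;> simp [η, ξ]
  rw [hv', trajMatrix, sumElim_vecMul_fromRows, vecMul_hankel] at hv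
  have hrel : ∀ t < J + Fintype.card (Fin n ⊕ Fin 1),
      ∑ k ∈ range L, η k ⬝ᵥ u (k + t) + ξ ⬝ᵥ homogenizeTraj x t = 0 := fun t ht =>
    congrFun hv ⟨t, by omega⟩
  obtain ⟨hη, hξB⟩ :=
    hx.left_kernel (hcard ▸ hpe) (fun k hk => funext fun ρ => dif_neg (by omega)) hrel
  have hξx : ξ ∘ Sum.inl = 0 := hAB.eq_zero_of_vecMul fun e he => by
    rw [← vecMul_vecMul, ← vecMul_homogenize_pow_vecMul_fromRows, vecMul_vecMul]
    exact hξB e (by omega)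
  have hξ1 : ξ (Sum.inr 0) = 0 := by
    have hξx' : ∀ i, ξ (Sum.inl i) = 0 := congrFun hξx
    simpa [hη, homogenizeTraj, dotProduct, hξx'] using hrel 0 (by omega)
  rw [hv']
  ext (⟨k, ρ⟩ | i | i)
  · simp [hη]
  · exact congrFun hξx i
  · simpa [Subsingleton.elim i 0] using hξ1

def extendByZero {V : Type*} [Zero V] {T : ℕ} (ω : Fin T → V) (t : ℕ) : V :=
  if h : t < T then ω ⟨t, h⟩ else 0

theorem hankelMat_eq_hankel {q : ℕ} (T : ℕ) (ω : Fin T → Fin q → ℝ) (k : ℕ) :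
    hankelMat T ω k = hankel (extendByZero ω) k (T - k + 1) := by
  ext r c
  simp only [hankelMat, hankel, extendByZero, of_apply]
  split_ifs <;> rfl

theorem HankelExciting.vecMul_injective {q T k : ℕ} {ω : Fin T → Fin q → ℝ}
    (h : HankelExciting T ω k) :
    Function.Injective (hankel (extendByZero ω) k (T - k + 1)).vecMul := by
  rw [← hankelMat_eq_hankel]
  exact vecMul_injective_of_rank_eq_card (h.trans (by simp [mul_comm]))

theorem le_of_hankel_vecMul_injective {μ : Type*} [Fintype μ] [Nonempty μ]
    {T K J : ℕ} {ω : Fin T → μ → ℝ} (h : Function.Injective (hankel (extendByZero ω) K J).vecMul) :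
    K ≤ T := by
  classical
  by_contra! hK
  obtain ⟨ρ⟩ := ‹Nonempty μ›
  have hrow : Pi.single (⟨K - 1, by omega⟩, ρ) 1 ᵥ* hankel (extendByZero ω) K J =
      0 ᵥ* hankel (extendByZero ω) K J := by
    rw [single_vecMul, zero_vecMul, one_smul]
    funext c
    simp [hankel, extendByZero, show ¬ K - 1 + (c : ℕ) < T by omega]
  simpa using congrFun (h hrow) (⟨K - 1, by omega⟩, ρ)

theorem hankelMat_comp_mulVec {q r T k : ℕ} {ω : Fin T → Fin q → ℝ} (f : Fin r → Fin q)
    {g : Fin (T - k + 1) → ℝ} {v : Fin k → Fin q → ℝ} (h : hankelMat T ω k *ᵥ g = colVec v) :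
    hankelMat T (fun t => ω t ∘ f) k *ᵥ g = colVec fun i => v i ∘ f :=
  funext fun p => congrFun h (p.1, f p.2)

theorem hankelMat_mulVec_eq_colVec_of_sum_smul_shift {σ : Type*} [Fintype σ] {p T L : ℕ}
    {yd : Fin T → Fin p → ℝ} {C : Matrix (Fin p) σ ℝ} {xd x : ℕ → σ → ℝ}
    (hyd : ∀ t : Fin T, yd t = C *ᵥ xd t) (hLT : L ≤ T) {g : Fin (T - L + 1) → ℝ}
    (hx : ∀ t < L, ∑ c, g c • xd (t + c) = x t) :
    hankelMat T yd L *ᵥ g = colVec fun k : Fin L => C *ᵥ x k := by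
  funext ⟨k, ρ⟩
  change ∑ c, hankelMat T yd L (k, ρ) c * g c = _
  rw [colVec, ← hx k k.isLt, mulVec_sum, Finset.sum_apply]
  refine sum_congr rfl fun c _ => ?_
  rw [hankelMat, dif_pos (by omega), hyd, mulVec_smul, Pi.smul_apply, smul_eq_mul, mul_comm]

def snocCols {σ : Type*} {m : ℕ} (B : Matrix σ (Fin m) ℝ) (h : σ → ℝ) :
    Matrix σ (Fin (m + 1)) ℝ :=
  Matrix.of fun i => Fin.snoc (B i) (h i)

theorem snocCols_mulVec_snoc {σ : Type*} {m : ℕ} (B : Matrix σ (Fin m) ℝ) (h : σ → ℝ)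
    (v : Fin m → ℝ) (e : ℝ) : snocCols B h *ᵥ Fin.snoc v e = B *ᵥ v + e • h := by
  ext i
  simp [snocCols, mulVec, dotProduct, Fin.sum_univ_castSucc, mul_comm]

theorem fromCols_eq_snocCols_submatrix {σ : Type*} {m : ℕ} (B : Matrix σ (Fin m) ℝ) (h : σ → ℝ) :
    Matrix.fromCols B (Matrix.of fun i (_ : Fin 1) => h i) =
      (snocCols B h).submatrix id finSumFinEquiv := by
  ext i (j | j)
  · change B i j = Fin.snoc (α := fun _ => ℝ) (B i) (h i) (Fin.castSucc j)
    simp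
  · obtain rfl := Subsingleton.elim j 0
    change h i = Fin.snoc (α := fun _ => ℝ) (B i) (h i) (Fin.last m)
    simp

theorem IsAffTraj.exists_isLinTraj {n m p T : ℕ} {A : Matrix (Fin n) (Fin n) ℝ}
    {Bb : Matrix (Fin n) (Fin m) ℝ} {H : Fin n → ℝ} {Cb : Matrix (Fin p) (Fin n) ℝ}
    {Lb : Fin n → ℝ} {Ly : Fin p → ℝ} {ud : Fin T → Fin m → ℝ} {εd : Fin T → ℝ}
    {yd : Fin T → Fin p → ℝ} (h : IsAffTraj A Bb H Cb Lb Ly T ud εd yd) :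
    ∃ x : ℕ → Fin n → ℝ,
      IsLinTraj (homogenize A Lb) (Matrix.fromRows (snocCols Bb H) 0)
        (extendByZero fun t => (Fin.snoc (ud t) (εd t) : Fin (m + 1) → ℝ)) (homogenizeTraj x) ∧
      ∀ t : Fin T,
        yd t = Matrix.fromCols Cb (Matrix.of fun i (_ : Fin 1) => Ly i) *ᵥ homogenizeTraj x t := by
  obtain ⟨xT, hxT⟩ := h
  set U := extendByZero fun t => (Fin.snoc (ud t) (εd t) : Fin (m + 1) → ℝ)
  -- Past the horizon the state is continued by the dynamics, driven by the zero-extended input.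
  let x : ℕ → Fin n → ℝ := fun t =>
    Nat.rec (xT 0) (fun t xt => A *ᵥ xt + snocCols Bb H *ᵥ U t + Lb) t
  have hxT' : ∀ t (ht : t < T + 1), x t = xT ⟨t, ht⟩ := by
    intro t
    induction t with
    | zero => exact fun _ => rfl
    | succ t ih =>
      intro ht
      change A *ᵥ x t + snocCols Bb H *ᵥ U t + Lb = _
      rw [ih (by omega), show xT ⟨t + 1, ht⟩ = xT (Fin.succ ⟨t, by omega⟩) from rfl, (hxT _).1]
      simp only [U, extendByZero, dif_pos (show t < T by omega), snocCols_mulVec_snoc]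
      rw [Fin.castSucc_mk]
      abel
  refine ⟨x, isLinTraj_homogenize fun t => rfl, fun t => ?_⟩
  rw [(hxT t).2, homogenizeTraj, fromCols_mulVec_sumElim, hxT' t (Nat.lt_succ_of_lt t.isLt)]
  congr 1
  ext i
  simp [mulVec, dotProduct]

theorem stmt2_general {n m p T : ℕ}
    (A : Matrix (Fin n) (Fin n) ℝ) (Bb : Matrix (Fin n) (Fin m) ℝ)
    (H : Fin n → ℝ) (Cb : Matrix (Fin p) (Fin n) ℝ) (Lb : Fin n → ℝ) (Ly : Fin p → ℝ)
    (hctrb : Controllable A (Matrix.fromCols Bb (Matrix.of fun i (_ : Fin 1) => H i)))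
    (ud : Fin T → Fin m → ℝ) (εd : Fin T → ℝ) (yd : Fin T → Fin p → ℝ)
    (hd : IsAffTraj A Bb H Cb Lb Ly T ud εd yd)
    (L : ℕ)
    (hexc : HankelExciting T (fun t => Fin.snoc (ud t) (εd t)) (L + n + 1)) :
    ∀ (u : Fin L → Fin m → ℝ) (ε : Fin L → ℝ) (y : Fin L → Fin p → ℝ),
      IsAffTraj A Bb H Cb Lb Ly L u ε y →
      ∃ g : Fin (T - L + 1) → ℝ,
        hankelMat T ud L *ᵥ g = colVec u ∧
        hankelMat T (fun t (_ : Fin 1) => εd t) L *ᵥ g = colVec (fun k (_ : Fin 1) => ε k) ∧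
        hankelMat T yd L *ᵥ g = colVec y ∧
        ∑ j, g j = 1 := by
  intro u ε y htraj
  obtain ⟨xd, hxd, hyd⟩ := hd.exists_isLinTraj
  obtain ⟨x, hx, hy⟩ := htraj.exists_isLinTraj
  have hpe := hexc.vecMul_injective
  have hT := le_of_hankel_vecMul_injective hpe
  rw [fromCols_eq_snocCols_submatrix, controllable_submatrix_equiv_iff] at hctrb
  obtain ⟨g, hg⟩ := mulVec_surjective_of_vecMul_injective
    (hxd.trajMatrix_vecMul_injective_of_homogenize hctrb hpe (J' := T - L + 1) (by omega))
    (Sum.elim (fun q => extendByZero (fun k => (Fin.snoc (u k) (ε k) : Fin (m + 1) → ℝ)) q.1 q.2)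
      (homogenizeTraj x 0))
  have hz := hxd.sum_smul_shift_eq_of_trajMatrix_mulVec hx hg
  have hgU : hankelMat T (fun t => Fin.snoc (ud t) (εd t)) L *ᵥ g =
      colVec fun k => Fin.snoc (u k) (ε k) := by
    rw [hankelMat_eq_hankel]
    funext ⟨k, ρ⟩
    simpa [extendByZero, colVec, trajMatrix, fromRows_mulVec] using congrFun hg (Sum.inl (k, ρ))
  refine ⟨g, ?_, ?_, ?_, ?_⟩
  · simpa using hankelMat_comp_mulVec Fin.castSucc hgU
  · simpa [Function.comp_def] using hankelMat_comp_mulVec (fun _ : Fin 1 => Fin.last m) hgU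
  · rw [show y = _ from funext hy]
    exact hankelMat_mulVec_eq_colVec_of_sum_smul_shift hyd (by omega) fun t ht => hz t ht.le
  · simpa [homogenizeTraj] using congrFun (hz 0 (Nat.zero_le _)) (Sum.inr 0)

/-- non-parametric representation of the affinely masked system,
Hankel matrix structure. If `(A, [B̄ H])` is controllable, `(ū^d, ε^d, ȳ^d)` is a
length-`T` trajectory of the affine system, `1 ≤ L`, and the combined input `û^d`
(stacking `ū^d(k)` and `ε^d(k)`) is Hankel exciting of order `L + n + 1`, then every
length-`L` trajectory `(ū, ε, ȳ)` of the system satisfies `𝓗_L(ū^d) ḡ = col(ū)`,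
`𝓗_L(ε^d) ḡ = col(ε)`, `𝓗_L(ȳ^d) ḡ = col(ȳ)` and `1ᵀ ḡ = 1` for some
`ḡ ∈ ℝ^{T−L+1}`. -/
theorem stmt2 {n m p T : ℕ}
    (A : Matrix (Fin n) (Fin n) ℝ) (Bb : Matrix (Fin n) (Fin m) ℝ)
    (H : Fin n → ℝ) (Cb : Matrix (Fin p) (Fin n) ℝ) (Lb : Fin n → ℝ) (Ly : Fin p → ℝ)
    (hctrb : Controllable A (Matrix.fromCols Bb (Matrix.of fun i (_ : Fin 1) => H i)))
    (ud : Fin T → Fin m → ℝ) (εd : Fin T → ℝ) (yd : Fin T → Fin p → ℝ)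
    (hd : IsAffTraj A Bb H Cb Lb Ly T ud εd yd)
    (L : ℕ) (hL : 1 ≤ L)
    (hexc : HankelExciting T (fun t => Fin.snoc (ud t) (εd t)) (L + n + 1)) :
    ∀ (u : Fin L → Fin m → ℝ) (ε : Fin L → ℝ) (y : Fin L → Fin p → ℝ),
      IsAffTraj A Bb H Cb Lb Ly L u ε y →
      ∃ g : Fin (T - L + 1) → ℝ,
        hankelMat T ud L *ᵥ g = colVec u ∧
        hankelMat T (fun t (_ : Fin 1) => εd t) L *ᵥ g = colVec (fun k (_ : Fin 1) => ε k) ∧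
        hankelMat T yd L *ᵥ g = colVec y ∧
        ∑ j, g j = 1 :=
  stmt2_general A Bb H Cb Lb Ly hctrb ud εd yd hd L hexc
end

section
/- Consider the discrete-time affine state dynamics x(k+1) = A x(k) + B̂ û(k) + L̄ with A ∈ ℝ^{n×n}, B̂ ∈ ℝ^{n×q}, L̄ ∈ ℝ^n, and assume (A, B̂) is controllable. Let û^d : {0,…,T−1} → ℝ^q and x^d : {0,…,T} → ℝ^n satisfy x^d(k+1) = A x^d(k) + B̂ û^d(k) + L̄ for all 0 ≤ k ≤ T−1, and let L ≥ 1 with L ≤ T. If û^d is L-Page exciting of order n + 2, then the ((qL + n + 1) × ⌊T/L⌋) matrix obtained by vertically stacking 𝓟_L(û^d), the matrix X_d = [x^d(0), x^d(L), x^d(2L), …, x^d((⌊T/L⌋−1)L)] ∈ ℝ^{n×⌊T/L⌋}, and the all-ones row vector of length ⌊T/L⌋, has full row rank qL + n + 1. -/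
open Matrix

/-- The block Page matrix of depth `k` of a signal `ω : {0,…,T−1} → ℝ^q`:
its `(i,j)` block entry (for `i < k`, `j < ⌊T/k⌋`) is the vector `ω(jk+i) ∈ ℝ^q`. -/
noncomputable def pageMat {q : ℕ} (T : ℕ) (ω : Fin T → Fin q → ℝ) (k : ℕ) :
    Matrix (Fin k × Fin q) (Fin (T / k)) ℝ := fun r c =>
  if h : (c : ℕ) * k + (r.1 : ℕ) < T then ω ⟨(c : ℕ) * k + (r.1 : ℕ), h⟩ r.2 else 0

/-- The vertical stacking of the depth-`k` block Page matrices of the shifted signals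
`ω(·+rk)` for `r = 0,…,l−1`, each truncated to its first `⌊T/k⌋−l+1` columns: its
`((r,i),j)` block entry is `ω((j+r)k + i)`. -/
noncomputable def pageStackMat {q : ℕ} (T : ℕ) (ω : Fin T → Fin q → ℝ) (k l : ℕ) :
    Matrix (Fin l × Fin k × Fin q) (Fin (T / k - l + 1)) ℝ := fun r c =>
  if h : ((c : ℕ) + (r.1 : ℕ)) * k + (r.2.1 : ℕ) < T then
    ω ⟨((c : ℕ) + (r.1 : ℕ)) * k + (r.2.1 : ℕ), h⟩ r.2.2
  else 0

/-- A signal is `k`-Page exciting of order `l` if the stacked Page matrix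
has full row rank `q·k·l`. -/
def PageExciting {q : ℕ} (T : ℕ) (ω : Fin T → Fin q → ℝ) (k l : ℕ) : Prop :=
  (pageStackMat T ω k l).rank = q * k * l

/-- The matrix `X_d = [x^d(0), x^d(L), x^d(2L), …]` of stacked states with stride `L`. -/
noncomputable def stateColsStride {n T : ℕ} (xd : Fin (T + 1) → Fin n → ℝ)
    (L cols : ℕ) : Matrix (Fin n) (Fin cols) ℝ := fun i j =>
  if h : (j : ℕ) * L < T + 1 then xd ⟨(j : ℕ) * L, h⟩ i else 0


section Stmt10Aux

open Matrix Finset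

private lemma rank_eq_card_rows_iff' {m k : Type} [Fintype m] [Fintype k] [DecidableEq m]
    (M : Matrix m k ℝ) :
    M.rank = Fintype.card m ↔ ∀ v : m → ℝ, v ᵥ* M = 0 → v = 0 := by
  rw [← Matrix.rank_transpose]
  have hrn := LinearMap.finrank_range_add_finrank_ker (Mᵀ.mulVecLin)
  rw [Module.finrank_pi] at hrn
  rw [Matrix.rank]
  constructor
  · intro h v hv
    have hker : Module.finrank ℝ (LinearMap.ker Mᵀ.mulVecLin) = 0 := by omega
    rw [Submodule.finrank_eq_zero] at hker
    have : v ∈ LinearMap.ker Mᵀ.mulVecLin := by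
      simp [LinearMap.mem_ker, Matrix.mulVecLin_apply, Matrix.mulVec_transpose, hv]
    rw [hker] at this
    simpa using this
  · intro h
    have hker : LinearMap.ker Mᵀ.mulVecLin = ⊥ := by
      rw [Submodule.eq_bot_iff]
      intro v hv
      exact h v (by rwa [LinearMap.mem_ker, Matrix.mulVecLin_apply,
        Matrix.mulVec_transpose] at hv)
    rw [hker] at hrn
    simpa using hrn

private lemma dot_sum' {ι m : Type*} [Fintype m] (v : m → ℝ) (s : Finset ι) (f : ι → m → ℝ) :
    v ⬝ᵥ (∑ i ∈ s, f i) = ∑ i ∈ s, v ⬝ᵥ f i := by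
  simp only [dotProduct, Finset.sum_apply, Finset.mul_sum]
  exact Finset.sum_comm

private lemma sum_dot' {ι m : Type*} [Fintype m] (s : Finset ι) (f : ι → m → ℝ) (x : m → ℝ) :
    (∑ i ∈ s, f i) ⬝ᵥ x = ∑ i ∈ s, f i ⬝ᵥ x := by
  simp only [dotProduct, Finset.sum_apply, Finset.sum_mul]
  exact Finset.sum_comm

private lemma sum_smul_vecMul' {m k : Type*} [Fintype m] [Fintype k] {ι : Type*} (s : Finset ι)
    (c : ι → ℝ) (ξ : m → ℝ) (M : ι → Matrix m k ℝ) :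
    ∑ r ∈ s, c r • (ξ ᵥ* M r) = ξ ᵥ* (∑ r ∈ s, c r • M r) := by
  funext j
  simp only [Finset.sum_apply, Pi.smul_apply, Matrix.vecMul, dotProduct, Matrix.sum_apply,
    Matrix.smul_apply, smul_eq_mul, Finset.smul_sum, Finset.mul_sum]
  rw [Finset.sum_comm]
  refine Finset.sum_congr rfl fun i _ => Finset.sum_congr rfl fun r _ => by ring

private lemma sum_range_mul_split' {M : Type*} [AddCommMonoid M] (f : ℕ → M) (r L : ℕ) :
    ∑ s ∈ Finset.range (r * L), f s
      = ∑ t ∈ Finset.range r, ∑ i ∈ Finset.range L, f (t * L + i) := by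
  induction r with
  | zero => simp
  | succ r ih =>
    rw [Nat.succ_mul, Finset.sum_range_add, ih, Finset.sum_range_succ]

private lemma sub_index_eq' (r t L i : ℕ) (ht : t < r) (hi : i < L) :
    r * L - 1 - (t * L + i) = (r - 1 - t) * L + (L - 1 - i) := by
  have h0 : r = (r - 1 - t) + (t + 1) := by omega
  have h1 : r * L = (r - 1 - t) * L + (t * L + L) := by
    calc r * L = ((r - 1 - t) + (t + 1)) * L := by rw [← h0]
    _ = (r - 1 - t) * L + (t + 1) * L := by rw [Nat.add_mul]
    _ = (r - 1 - t) * L + (t * L + L) := by rw [Nat.succ_mul]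
  generalize (r - 1 - t) * L = a at *
  generalize t * L = b at *
  omega

private lemma sum_prod_fin' {q : ℕ} (L : ℕ) (F : ℕ → Fin q → ℝ) :
    ∑ ip : Fin L × Fin q, F (ip.1 : ℕ) ip.2 = ∑ i ∈ Finset.range L, ∑ p : Fin q, F i p := by
  rw [Fintype.sum_prod_type, ← Fin.sum_univ_eq_sum_range (fun i => ∑ p : Fin q, F i p) L]

/-- totalized input signal -/
private noncomputable def Usig {q T : ℕ} (ud : Fin T → Fin q → ℝ) (m : ℕ) : Fin q → ℝ :=
  fun p => if h : m < T then ud ⟨m, h⟩ p else 0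

/-- totalized state signal -/
private noncomputable def Xsig {n T : ℕ} (xd : Fin (T + 1) → Fin n → ℝ) (m : ℕ) : Fin n → ℝ :=
  if h : m < T + 1 then xd ⟨m, h⟩ else 0

private lemma state_unfold {n q T : ℕ}
    (A : Matrix (Fin n) (Fin n) ℝ) (Bh : Matrix (Fin n) (Fin q) ℝ) (Lb : Fin n → ℝ)
    (ud : Fin T → Fin q → ℝ) (xd : Fin (T + 1) → Fin n → ℝ)
    (hdyn : ∀ k : Fin T, xd k.succ = A *ᵥ xd k.castSucc + Bh *ᵥ ud k + Lb) :
    ∀ t m, m + t ≤ T →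
      Xsig xd (m + t) = (A ^ t) *ᵥ Xsig xd m +
        ∑ s ∈ Finset.range t, (A ^ s) *ᵥ (Bh *ᵥ Usig ud (m + (t - 1 - s)) + Lb) := by
  intro t
  induction t with
  | zero => intro m hm; simp [Matrix.one_mulVec]
  | succ t ih =>
    intro m hm
    have hmT : m < T := by omega
    have hstep : Xsig xd (m + 1) = A *ᵥ Xsig xd m + (Bh *ᵥ Usig ud m + Lb) := by
      have := hdyn ⟨m, hmT⟩
      have h1 : (⟨m, hmT⟩ : Fin T).succ = (⟨m + 1, by omega⟩ : Fin (T+1)) := rfl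
      have h2 : (⟨m, hmT⟩ : Fin T).castSucc = (⟨m, by omega⟩ : Fin (T+1)) := rfl
      rw [h1, h2] at this
      have hU : Usig ud m = ud ⟨m, hmT⟩ := by
        funext p; simp [Usig, hmT]
      simp only [Xsig, dif_pos (show m + 1 < T + 1 by omega),
        dif_pos (show m < T + 1 by omega), hU]
      rw [this]; abel
    have hrw : m + (t + 1) = (m + 1) + t := by omega
    rw [hrw, ih (m + 1) (by omega), hstep]
    rw [Matrix.mulVec_add, Matrix.mulVec_mulVec, ← pow_succ]
    rw [Finset.sum_range_succ]
    have hcong : ∀ s ∈ Finset.range t,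
        (A ^ s) *ᵥ (Bh *ᵥ Usig ud (m + 1 + (t - 1 - s)) + Lb)
          = (A ^ s) *ᵥ (Bh *ᵥ Usig ud (m + (t + 1 - 1 - s)) + Lb) := by
      intro s hs
      rw [Finset.mem_range] at hs
      have : m + 1 + (t - 1 - s) = m + (t + 1 - 1 - s) := by omega
      rw [this]
    rw [Finset.sum_congr rfl hcong]
    have hlast : (A ^ t) *ᵥ (Bh *ᵥ Usig ud (m + (t + 1 - 1 - t)) + Lb)
        = (A ^ t) *ᵥ (Bh *ᵥ Usig ud m + Lb) := by
      have : m + (t + 1 - 1 - t) = m := by omega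
      rw [this]
    rw [hlast]
    abel

private lemma block_relation {n q T : ℕ}
    (A : Matrix (Fin n) (Fin n) ℝ) (Bh : Matrix (Fin n) (Fin q) ℝ) (Lb : Fin n → ℝ)
    (ud : Fin T → Fin q → ℝ) (xd : Fin (T + 1) → Fin n → ℝ)
    (hdyn : ∀ k : Fin T, xd k.succ = A *ᵥ xd k.castSucc + Bh *ᵥ ud k + Lb)
    (ξ : Fin n → ℝ) (L : ℕ) (j r : ℕ) (h : (j + r) * L ≤ T) :
    ξ ⬝ᵥ Xsig xd ((j + r) * L)
      = (ξ ᵥ* (A ^ (r * L))) ⬝ᵥ Xsig xd (j * L)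
        + ∑ t ∈ Finset.range r, ∑ i ∈ Finset.range L,
            (ξ ᵥ* (A ^ ((r - 1 - t) * L + (L - 1 - i)) * Bh)) ⬝ᵥ Usig ud ((j + t) * L + i)
        + ∑ s ∈ Finset.range (r * L), ξ ⬝ᵥ ((A ^ s) *ᵥ Lb) := by
  have hJ : (j + r) * L = j * L + r * L := by rw [Nat.add_mul]
  have hsu := state_unfold A Bh Lb ud xd hdyn (r * L) (j * L) (by omega)
  rw [hJ, hsu]
  rw [dotProduct_add, Matrix.dotProduct_mulVec, add_assoc]
  congr 1
  rw [dot_sum']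
  have hterm : ∀ s ∈ Finset.range (r * L),
      ξ ⬝ᵥ ((A ^ s) *ᵥ (Bh *ᵥ Usig ud (j * L + (r * L - 1 - s)) + Lb))
        = (ξ ᵥ* (A ^ s * Bh)) ⬝ᵥ Usig ud (j * L + (r * L - 1 - s))
          + ξ ⬝ᵥ ((A ^ s) *ᵥ Lb) := by
    intro s hs
    rw [Matrix.mulVec_add, dotProduct_add, Matrix.mulVec_mulVec,
      Matrix.dotProduct_mulVec]
  rw [Finset.sum_congr rfl hterm, Finset.sum_add_distrib]
  congr 1
  have hrefl : ∑ s ∈ Finset.range (r * L),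
      (ξ ᵥ* (A ^ s * Bh)) ⬝ᵥ Usig ud (j * L + (r * L - 1 - s))
      = ∑ s ∈ Finset.range (r * L),
      (ξ ᵥ* (A ^ (r * L - 1 - s) * Bh)) ⬝ᵥ Usig ud (j * L + s) := by
    rw [← Finset.sum_range_reflect
      (fun s => (ξ ᵥ* (A ^ (r * L - 1 - s) * Bh)) ⬝ᵥ Usig ud (j * L + s)) (r * L)]
    refine Finset.sum_congr rfl ?_
    intro s hs
    rw [Finset.mem_range] at hs
    have : r * L - 1 - (r * L - 1 - s) = s := by omega
    rw [this]
  rw [hrefl, sum_range_mul_split'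
    (fun s => (ξ ᵥ* (A ^ (r * L - 1 - s) * Bh)) ⬝ᵥ Usig ud (j * L + s)) r L]
  refine Finset.sum_congr rfl ?_
  intro t ht
  rw [Finset.mem_range] at ht
  refine Finset.sum_congr rfl ?_
  intro i hi
  rw [Finset.mem_range] at hi
  rw [sub_index_eq' r t L i ht hi]
  have : j * L + (t * L + i) = (j + t) * L + i := by rw [Nat.add_mul]; omega
  rw [this]

private lemma stmt10_key {n q T : ℕ}
    (A : Matrix (Fin n) (Fin n) ℝ) (Bh : Matrix (Fin n) (Fin q) ℝ) (Lb : Fin n → ℝ)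
    (hctrb : Controllable A Bh)
    (ud : Fin T → Fin q → ℝ) (xd : Fin (T + 1) → Fin n → ℝ)
    (hdyn : ∀ k : Fin T, xd k.succ = A *ᵥ xd k.castSucc + Bh *ᵥ ud k + Lb)
    (L : ℕ) (hL : 1 ≤ L) (hLT : L ≤ T)
    (hexc : PageExciting T ud L (n + 2))
    (v : ((Fin L × Fin q) ⊕ Fin n) ⊕ Unit → ℝ)
    (hv : v ᵥ* (Matrix.fromRows
      (Matrix.fromRows (pageMat T ud L) (stateColsStride xd L (T / L)))
      (Matrix.of fun (_ : Unit) (_ : Fin (T / L)) => (1 : ℝ))) = 0) :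
    v = 0 := by
  have hNL : (T / L) * L ≤ T := Nat.div_mul_le_self T L
  have hN1 : 1 ≤ T / L := (Nat.one_le_div_iff (by omega)).mpr hLT
  set η : Fin L × Fin q → ℝ := fun ip => v (Sum.inl (Sum.inl ip)) with hηdef
  set ξ : Fin n → ℝ := fun i => v (Sum.inl (Sum.inr i)) with hξdef
  set γ : ℝ := v (Sum.inr ()) with hγdef
  -- the basic column relations
  have hR : ∀ c : ℕ, c < T / L →
      (∑ ip : Fin L × Fin q, η ip * Usig ud (c * L + (ip.1 : ℕ)) ip.2)
        + ξ ⬝ᵥ Xsig xd (c * L) + γ = 0 := by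
    intro c hc
    have h0 := congrFun hv ⟨c, hc⟩
    simp only [Matrix.vecMul, dotProduct, Fintype.sum_sum_type, Matrix.fromRows_apply_inl,
      Matrix.fromRows_apply_inr, Matrix.of_apply, Pi.zero_apply, Fintype.sum_unique] at h0
    have hpage : ∀ ip : Fin L × Fin q,
        pageMat T ud L ip ⟨c, hc⟩ = Usig ud (c * L + (ip.1 : ℕ)) ip.2 := fun ip => rfl
    have hstate : ∀ i : Fin n,
        stateColsStride xd L (T / L) i ⟨c, hc⟩ = Xsig xd (c * L) i := by
      intro i
      by_cases h : c * L < T + 1 <;> simp [stateColsStride, Xsig, h]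
    simp only [hpage, hstate, mul_one] at h0
    simpa [hηdef, hξdef, hγdef, dotProduct] using h0
  -- first handle the degenerate case
  by_cases hbig : n + 2 ≤ T / L
  case neg =>
    have hcols : T / L - (n + 2) + 1 = 1 := by omega
    have hq : q = 0 := by
      have h1 := Matrix.rank_le_card_width (pageStackMat T ud L (n + 2))
      rw [hexc] at h1
      simp [hcols] at h1
      by_contra hq0
      have h2 : 1 ≤ q := by omega
      have h3 : 1 * 1 * (n + 2) ≤ q * L * (n + 2) :=
        Nat.mul_le_mul (Nat.mul_le_mul h2 hL) (le_refl _)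
      omega
    have hn : n = 0 := by
      have h1 := Matrix.rank_le_card_width (ctrbMat A Bh)
      rw [hctrb] at h1
      simp [hq] at h1
      omega
    have hγ0 : γ = 0 := by
      have h0 := hR 0 hN1
      rw [Finset.sum_eq_zero (fun ip _ => by exact absurd ip.2.isLt (by omega))] at h0
      have hx : ξ ⬝ᵥ Xsig xd (0 * L) = 0 := by
        rw [dotProduct]
        exact Finset.sum_eq_zero (fun i _ => by exact absurd i.isLt (by omega))
      rw [hx] at h0
      simpa using h0
    funext x
    rcases x with ((⟨i, p⟩ | i) | u)
    · exact absurd p.isLt (by omega)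
    · exact absurd i.isLt (by omega)
    · exact hγ0
  case pos =>
    -- definitions
    set α : ℕ → ℝ := fun r => (A ^ L).charpoly.coeff r with hα
    set b : ℕ → Fin q → ℝ := fun m => ξ ᵥ* (A ^ m * Bh) with hb
    set ee : ℕ → ℝ := fun j => ∑ ip : Fin L × Fin q, η ip * Usig ud (j * L + (ip.1 : ℕ)) ip.2
      with hee
    set cst : ℕ → ℝ := fun r => ∑ s ∈ Finset.range (r * L), ξ ⬝ᵥ ((A ^ s) *ᵥ Lb) with hcst
    set P : ℕ → ℕ → ℝ := fun r j => ∑ t ∈ Finset.range r, ∑ i ∈ Finset.range L,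
      (b ((r - 1 - t) * L + (L - 1 - i))) ⬝ᵥ Usig ud ((j + t) * L + i) with hP
    -- combined relations
    have hR' : ∀ r j : ℕ, j + r < T / L →
        ee (j + r) + (ξ ᵥ* (A ^ (r * L))) ⬝ᵥ Xsig xd (j * L) + P r j + cst r + γ = 0 := by
      intro r j hjr
      have h1 : (j + r) * L ≤ T := le_trans (Nat.mul_le_mul_right L (by omega)) hNL
      have h2 := hR (j + r) hjr
      rw [block_relation A Bh Lb ud xd hdyn ξ L j r h1] at h2
      rw [hee, hP, hcst, hb]
      linarith [h2]
    -- Cayley-Hamilton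
    have hCH : ∑ r ∈ Finset.range (n + 1), α r • (A ^ L) ^ r = (0 : Matrix (Fin n) (Fin n) ℝ) := by
      have h1 := Matrix.aeval_self_charpoly (A ^ L)
      rw [Polynomial.aeval_eq_sum_range, Matrix.charpoly_natDegree_eq_dim, Fintype.card_fin] at h1
      exact h1
    have hαn : α n = 1 := by
      have h1 := (Matrix.charpoly_monic (A ^ L)).coeff_natDegree
      rwa [Matrix.charpoly_natDegree_eq_dim, Fintype.card_fin] at h1
    have hαn1 : α (n + 1) = 0 := by
      apply Polynomial.coeff_eq_zero_of_natDegree_lt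
      rw [Matrix.charpoly_natDegree_eq_dim, Fintype.card_fin]
      omega
    have hpow : ∀ r : ℕ, A ^ (r * L) = (A ^ L) ^ r := fun r => by rw [Nat.mul_comm, pow_mul]
    have haker : ∀ x : Fin n → ℝ,
        ∑ r ∈ Finset.range (n + 1), α r * ((ξ ᵥ* (A ^ (r * L))) ⬝ᵥ x) = 0 := by
      intro x
      have h1 : ∀ r ∈ Finset.range (n + 1),
          α r * ((ξ ᵥ* (A ^ (r * L))) ⬝ᵥ x) = (α r • (ξ ᵥ* (A ^ L) ^ r)) ⬝ᵥ x := by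
        intro r _
        rw [hpow r, smul_dotProduct, smul_eq_mul]
      rw [Finset.sum_congr rfl h1, ← sum_dot', sum_smul_vecMul', hCH, Matrix.vecMul_zero,
        zero_dotProduct]
    -- the combined-sum relation
    have hGK : ∀ j : ℕ, j + n < T / L →
        (∑ r ∈ Finset.range (n + 1), α r * (ee (j + r) + P r j))
          + (∑ r ∈ Finset.range (n + 1), α r * (cst r + γ)) = 0 := by
      intro j hj
      have h1 : ∑ r ∈ Finset.range (n + 1),
          α r * (ee (j + r) + (ξ ᵥ* (A ^ (r * L))) ⬝ᵥ Xsig xd (j * L) + P r j + cst r + γ)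
          = 0 := by
        apply Finset.sum_eq_zero
        intro r hr
        rw [Finset.mem_range] at hr
        rw [hR' r j (by omega)]
        ring
      have h2 := haker (Xsig xd (j * L))
      have h3 : ∀ r ∈ Finset.range (n + 1),
          α r * (ee (j + r) + (ξ ᵥ* (A ^ (r * L))) ⬝ᵥ Xsig xd (j * L) + P r j + cst r + γ)
            = α r * (ee (j + r) + P r j)
              + α r * ((ξ ᵥ* (A ^ (r * L))) ⬝ᵥ Xsig xd (j * L))
              + α r * (cst r + γ) := fun r _ => by ring
      rw [Finset.sum_congr rfl h3, Finset.sum_add_distrib, Finset.sum_add_distrib, h2] at h1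
      linarith [h1]
    -- the row-combination coefficients
    set vv : ℕ → Fin L × Fin q → ℝ := fun u ip =>
      α u * η ip + ∑ r ∈ Finset.Ioc u n,
        α r * b ((r - 1 - u) * L + (L - 1 - (ip.1 : ℕ))) ip.2 with hvv
    have hGv : ∀ j : ℕ, (∑ r ∈ Finset.range (n + 1), α r * (ee (j + r) + P r j))
        = ∑ u ∈ Finset.range (n + 1), ∑ ip : Fin L × Fin q,
            vv u ip * Usig ud ((j + u) * L + (ip.1 : ℕ)) ip.2 := by
      intro j
      have h1 : ∀ u ∈ Finset.range (n + 1),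
          (∑ ip : Fin L × Fin q, vv u ip * Usig ud ((j + u) * L + (ip.1 : ℕ)) ip.2)
            = α u * ee (j + u)
              + ∑ r ∈ Finset.Ioc u n, α r * (∑ i ∈ Finset.range L,
                  b ((r - 1 - u) * L + (L - 1 - i)) ⬝ᵥ Usig ud ((j + u) * L + i)) := by
        intro u _
        have e1 : ∀ ip : Fin L × Fin q,
            vv u ip * Usig ud ((j + u) * L + (ip.1 : ℕ)) ip.2
              = α u * (η ip * Usig ud ((j + u) * L + (ip.1 : ℕ)) ip.2)
                + ∑ r ∈ Finset.Ioc u n,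
                    α r * (b ((r - 1 - u) * L + (L - 1 - (ip.1 : ℕ))) ip.2
                      * Usig ud ((j + u) * L + (ip.1 : ℕ)) ip.2) := by
          intro ip
          simp only [hvv]
          rw [add_mul, Finset.sum_mul, mul_assoc]
          congr 1
          exact Finset.sum_congr rfl fun r _ => by rw [mul_assoc]
        rw [Finset.sum_congr rfl (fun ip _ => e1 ip), Finset.sum_add_distrib, ← Finset.mul_sum]
        congr 1
        rw [Finset.sum_comm]
        refine Finset.sum_congr rfl fun r _ => ?_
        rw [← Finset.mul_sum]
        congr 1
        have h2 := sum_prod_fin' L (fun i p =>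
          b ((r - 1 - u) * L + (L - 1 - i)) p * Usig ud ((j + u) * L + i) p)
        rw [h2]
        rfl
      rw [Finset.sum_congr rfl h1, Finset.sum_add_distrib]
      have h2 : ∑ u ∈ Finset.range (n + 1), ∑ r ∈ Finset.Ioc u n,
            α r * (∑ i ∈ Finset.range L,
              b ((r - 1 - u) * L + (L - 1 - i)) ⬝ᵥ Usig ud ((j + u) * L + i))
          = ∑ r ∈ Finset.range (n + 1), ∑ u ∈ Finset.range r,
            α r * (∑ i ∈ Finset.range L,
              b ((r - 1 - u) * L + (L - 1 - i)) ⬝ᵥ Usig ud ((j + u) * L + i)) := by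
        apply Finset.sum_comm'
        intro x y
        simp only [Finset.mem_range, Finset.mem_Ioc]
        omega
      rw [h2]
      have h3 : ∀ r ∈ Finset.range (n + 1),
          α r * (ee (j + r) + P r j)
            = α r * ee (j + r) + ∑ u ∈ Finset.range r,
                α r * (∑ i ∈ Finset.range L,
                  b ((r - 1 - u) * L + (L - 1 - i)) ⬝ᵥ Usig ud ((j + u) * L + i)) := by
        intro r _
        simp only [hP]
        rw [mul_add, Finset.mul_sum, Finset.mul_sum]
      rw [Finset.sum_congr rfl h3, Finset.sum_add_distrib]
    -- the stacked-Page kernel vector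
    set w : Fin (n + 2) × Fin L × Fin q → ℝ := fun rip =>
      (if (rip.1 : ℕ) = 0 then 0 else vv ((rip.1 : ℕ) - 1) rip.2) - vv (rip.1 : ℕ) rip.2
      with hw
    have hvvtop : ∀ ip : Fin L × Fin q, vv (n + 1) ip = 0 := by
      intro ip
      simp only [hvv]
      rw [Finset.Ioc_eq_empty (by omega)]
      simp [hαn1]
    have hker : w ᵥ* pageStackMat T ud L (n + 2) = 0 := by
      funext c
      obtain ⟨cval, hc⟩ := c
      have hcval : cval ≤ T / L - (n + 2) := by omega
      have hE : (w ᵥ* pageStackMat T ud L (n + 2)) ⟨cval, hc⟩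
          = ∑ rip : Fin (n + 2) × Fin L × Fin q,
              w rip * Usig ud ((cval + (rip.1 : ℕ)) * L + (rip.2.1 : ℕ)) rip.2.2 := rfl
      rw [hE, Fintype.sum_prod_type]
      have hE2 : ∑ r : Fin (n + 2), ∑ ip : Fin L × Fin q,
            w (r, ip) * Usig ud ((cval + (r : ℕ)) * L + (ip.1 : ℕ)) ip.2
          = ∑ r ∈ Finset.range (n + 2), ∑ ip : Fin L × Fin q,
            ((if r = 0 then 0 else vv (r - 1) ip) - vv r ip)
              * Usig ud ((cval + r) * L + (ip.1 : ℕ)) ip.2 := by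
        rw [← Fin.sum_univ_eq_sum_range (fun r => ∑ ip : Fin L × Fin q,
          ((if r = 0 then 0 else vv (r - 1) ip) - vv r ip)
            * Usig ud ((cval + r) * L + (ip.1 : ℕ)) ip.2) (n + 2)]
      rw [hE2]
      have hsplit : ∀ r ∈ Finset.range (n + 2),
          (∑ ip : Fin L × Fin q,
            ((if r = 0 then 0 else vv (r - 1) ip) - vv r ip)
              * Usig ud ((cval + r) * L + (ip.1 : ℕ)) ip.2)
          = (∑ ip : Fin L × Fin q,
              (if r = 0 then 0 else vv (r - 1) ip) * Usig ud ((cval + r) * L + (ip.1 : ℕ)) ip.2)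
            - ∑ ip : Fin L × Fin q,
              vv r ip * Usig ud ((cval + r) * L + (ip.1 : ℕ)) ip.2 := by
        intro r _
        rw [← Finset.sum_sub_distrib]
        exact Finset.sum_congr rfl fun ip _ => by rw [sub_mul]
      rw [Finset.sum_congr rfl hsplit, Finset.sum_sub_distrib]
      -- second part equals the j = cval combined sum
      have hsecond : ∑ r ∈ Finset.range (n + 2), ∑ ip : Fin L × Fin q,
            vv r ip * Usig ud ((cval + r) * L + (ip.1 : ℕ)) ip.2
          = ∑ r ∈ Finset.range (n + 1), α r * (ee (cval + r) + P r cval) := by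
        rw [Finset.sum_range_succ]
        have hz : ∑ ip : Fin L × Fin q,
            vv (n + 1) ip * Usig ud ((cval + (n + 1)) * L + (ip.1 : ℕ)) ip.2 = 0 :=
          Finset.sum_eq_zero (fun ip _ => by rw [hvvtop ip, zero_mul])
        rw [hz, add_zero, hGv cval]
      -- first part equals the j = cval + 1 combined sum
      have hfirst : ∑ r ∈ Finset.range (n + 2), ∑ ip : Fin L × Fin q,
            (if r = 0 then 0 else vv (r - 1) ip)
              * Usig ud ((cval + r) * L + (ip.1 : ℕ)) ip.2
          = ∑ r ∈ Finset.range (n + 1), α r * (ee (cval + 1 + r) + P r (cval + 1)) := by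
        rw [Finset.sum_range_succ', hGv (cval + 1)]
        have hz : ∑ ip : Fin L × Fin q,
            (if (0 : ℕ) = 0 then (0 : ℝ) else vv (0 - 1) ip)
              * Usig ud ((cval + 0) * L + (ip.1 : ℕ)) ip.2 = 0 :=
          Finset.sum_eq_zero (fun ip _ => by rw [if_pos rfl, zero_mul])
        rw [hz, add_zero]
        refine Finset.sum_congr rfl fun u _ => Finset.sum_congr rfl fun ip _ => ?_
        rw [if_neg (Nat.succ_ne_zero u), Nat.add_sub_cancel,
          show cval + (u + 1) = cval + 1 + u by omega]
      rw [hfirst, hsecond]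
      have hK1 := hGK (cval + 1) (by omega)
      have hK2 := hGK cval (by omega)
      have : (0 : ℝ) = 0 := rfl
      simp only [Pi.zero_apply]
      linarith [hK1, hK2]
    have hwz : w = 0 := by
      have hcard : (pageStackMat T ud L (n + 2)).rank
          = Fintype.card (Fin (n + 2) × Fin L × Fin q) := by
        have : Fintype.card (Fin (n + 2) × Fin L × Fin q) = q * L * (n + 2) := by
          simp [Fintype.card_prod]
          ring
        rw [this]
        exact hexc
      exact (rank_eq_card_rows_iff' _).mp hcard w hker
    -- all the vv coefficients vanish
    have hvvzero : ∀ u : ℕ, u ≤ n + 1 → ∀ ip, vv u ip = 0 := by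
      have hstep : ∀ d, d ≤ n + 1 → ∀ ip, vv (n + 1 - d) ip = 0 := by
        intro d
        induction d with
        | zero => intro _ ip; exact hvvtop ip
        | succ d ih =>
          intro hd ip
          have h1 := ih (by omega)
          have h2 := congrFun hwz (⟨n + 1 - d, by omega⟩, ip)
          simp only [hw, Pi.zero_apply] at h2
          rw [if_neg (show ¬ ((n + 1 - d : ℕ) = 0) by omega)] at h2
          have h3 : (n + 1 - d) - 1 = n + 1 - (d + 1) := by omega
          rw [h3, h1 ip] at h2
          linarith [h2]
      intro u hu ip
      have := hstep (n + 1 - u) (by omega) ip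
      rwa [show n + 1 - (n + 1 - u) = u by omega] at this
    -- η vanishes
    have hηz : ∀ ip, η ip = 0 := by
      intro ip
      have h1 := hvvzero n (by omega) ip
      simp only [hvv] at h1
      rw [Finset.Ioc_self, Finset.sum_empty, add_zero, hαn, one_mul] at h1
      exact h1
    -- the b-coefficients vanish
    have hbz : ∀ d, d < n → ∀ i, i < L → ∀ p, b (d * L + (L - 1 - i)) p = 0 := by
      intro d
      induction d using Nat.strong_induction_on with
      | _ d ihd =>
        intro hd i hi p
        have hu : n - 1 - d ≤ n + 1 := by omega
        have h1 := hvvzero (n - 1 - d) hu (⟨i, hi⟩, p)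
        simp only [hvv] at h1
        rw [hηz (⟨i, hi⟩, p), mul_zero, zero_add] at h1
        have hmem : n ∈ Finset.Ioc (n - 1 - d) n := by
          simp only [Finset.mem_Ioc]
          omega
        rw [← Finset.sum_erase_add _ _ hmem] at h1
        have herase : ∑ r ∈ (Finset.Ioc (n - 1 - d) n).erase n,
            α r * b ((r - 1 - (n - 1 - d)) * L + (L - 1 - (⟨i, hi⟩ : Fin L))) p = 0 := by
          apply Finset.sum_eq_zero
          intro r hr
          simp only [Finset.mem_erase, Finset.mem_Ioc] at hr
          have h5 : r - 1 - (n - 1 - d) < d := by omega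
          rw [ihd (r - 1 - (n - 1 - d)) h5 (by omega) i hi p, mul_zero]
        rw [herase, zero_add] at h1
        have h6 : n - 1 - (n - 1 - d) = d := by omega
        rw [h6, hαn, one_mul] at h1
        exact h1
    have hbm : ∀ s : ℕ, s < n → ∀ p, b s p = 0 := by
      intro s hs p
      have hL0 : 0 < L := by omega
      have hk : s / L < n := lt_of_le_of_lt (Nat.div_le_self s L) hs
      have hmod := Nat.mod_lt s hL0
      have hiL : L - 1 - (s % L) < L := by omega
      have h1 := hbz (s / L) hk (L - 1 - s % L) hiL p
      rw [show L - 1 - (L - 1 - s % L) = s % L by omega] at h1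
      rw [Nat.div_add_mod' s L] at h1
      exact h1
    -- controllability kills ξ
    have hξz : ξ = 0 := by
      have h0 : ξ ᵥ* ctrbMat A Bh = 0 := by
        funext sp
        obtain ⟨s, p⟩ := sp
        have h1 := hbm (s : ℕ) s.isLt p
        simp only [hb] at h1
        simp only [Matrix.vecMul, dotProduct, ctrbMat, Matrix.of_apply, Pi.zero_apply]
        simpa [Matrix.vecMul, dotProduct] using h1
      have hcard : (ctrbMat A Bh).rank = Fintype.card (Fin n) := by
        rw [Fintype.card_fin]
        exact hctrb
      exact (rank_eq_card_rows_iff' _).mp hcard ξ h0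
    -- γ vanishes
    have hγz : γ = 0 := by
      have h0 := hR 0 hN1
      rw [Finset.sum_eq_zero (fun ip _ => by rw [hηz ip, zero_mul])] at h0
      rw [hξz, zero_dotProduct] at h0
      simpa using h0
    funext x
    rcases x with ((ip | i) | u)
    · exact hηz ip
    · exact congrFun hξz i
    · exact hγz

end Stmt10Aux
/-- full row rank of the stacked Page/state/ones matrix.
If `(A, B̂)` is controllable, `(û^d, x^d)` satisfies the affine dynamics
`x(k+1) = A x(k) + B̂ û(k) + L̄`, `1 ≤ L ≤ T`, and `û^d` is `L`-Page exciting of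
order `n + 2`, then the matrix obtained by stacking `𝓟_L(û^d)`,
`X_d = [x^d(0), x^d(L), …, x^d((⌊T/L⌋−1)L)]` and the all-ones row has full row rank
`qL + n + 1`. -/
theorem stmt10 {n q T : ℕ}
    (A : Matrix (Fin n) (Fin n) ℝ) (Bh : Matrix (Fin n) (Fin q) ℝ) (Lb : Fin n → ℝ)
    (hctrb : Controllable A Bh)
    (ud : Fin T → Fin q → ℝ) (xd : Fin (T + 1) → Fin n → ℝ)
    (hdyn : ∀ k : Fin T, xd k.succ = A *ᵥ xd k.castSucc + Bh *ᵥ ud k + Lb)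
    (L : ℕ) (hL : 1 ≤ L) (hLT : L ≤ T)
    (hexc : PageExciting T ud L (n + 2)) :
    (Matrix.fromRows
      (Matrix.fromRows (pageMat T ud L) (stateColsStride xd L (T / L)))
      (Matrix.of fun (_ : Unit) (_ : Fin (T / L)) => (1 : ℝ))).rank
      = q * L + n + 1 := by
  have hkey := stmt10_key A Bh Lb hctrb ud xd hdyn L hL hLT hexc
  have hcard : Fintype.card (((Fin L × Fin q) ⊕ Fin n) ⊕ Unit) = q * L + n + 1 := by
    simp [Fintype.card_sum, Fintype.card_prod, Fintype.card_fin]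
    ring
  rw [← hcard]
  exact (rank_eq_card_rows_iff' _).mpr hkey
end
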